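/- arXiv:1912.05164 — 15 statements merged into one kernel-verified Lean document; each statement's English description precedes it below -/
import Mathlib

section
/- Let K ≥ 1, let α_1,…,α_K ≥ 0 with Σ_k α_k = 1, let 0 ≤ c < θ̄, and for each k let F_k : ℝ → ℝ be nondecreasing with values in [0,1]. Suppose each profit function π_k(p) = (p − c)·(1 − F_k(p)) is concave on [0, θ̄]. Then the uniform price p_s = (c + θ̄)/2 satisfies Σ_k α_k·π_k(p_s) ≥ (1/2)·Σ_k α_k·(sup_{p ∈ [0,θ̄]} π_k(p)). In particular, the optimal uniform-price profit Π^U = sup_{p ∈ [0,θ̄]} Σ_k α_k π_k(p) is at least one half of the optimal third-degree price-discrimination profit Π* = Σ_k α_k · sup_{p ∈ [0,θ̄]} π_k(p). -/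
/-!
Each `π k` vanishes at `c`, is nonnegative at `θ` and nonpositive below `c`. On `[c, θ]`,
write `p_s = (c + θ) / 2` as a convex combination of `p` and whichever of `c`, `θ` lies on
the other side of `p_s`; the weight on `p` is at least `1 / 2`, so concavity gives
`π k p ≤ 2 * π k p_s`. Hence `sup π k ≤ 2 * π k p_s` for each segment, and averaging with the
weights `α k` gives both claims.
-/

open Set Finset

theorem ConcaveOn.le_two_mul_of_half_le {E : Type*} [AddCommMonoid E] [Module ℝ E] {s : Set E}
    {f : E → ℝ} (hf : ConcaveOn ℝ s f) {x y : E} (hx : x ∈ s) (hy : y ∈ s) (hfx : 0 ≤ f x)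
    (hfy : 0 ≤ f y) {t : ℝ} (ht : 1 / 2 ≤ t) (ht1 : t ≤ 1) :
    f y ≤ 2 * f ((1 - t) • x + t • y) := by
  have hseg := hf.2 hx hy (sub_nonneg.2 ht1) (by linarith) (sub_add_cancel 1 t)
  simp only [smul_eq_mul] at hseg
  nlinarith [mul_nonneg (sub_nonneg.2 ht1) hfx]

theorem ConcaveOn.le_two_mul_midpoint {f : ℝ → ℝ} {c θ p : ℝ} (hf : ConcaveOn ℝ (Icc c θ) f)
    (hfc : f c = 0) (hfθ : 0 ≤ f θ) (hp : p ∈ Icc c θ) : f p ≤ 2 * f ((c + θ) / 2) := by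
  have hcθ : c ≤ θ := hp.1.trans hp.2
  have hc : c ∈ Icc c θ := left_mem_Icc.2 hcθ
  have hθ : θ ∈ Icc c θ := right_mem_Icc.2 hcθ
  rcases le_or_gt (f p) 0 with hfp | hfp
  · have hmid := hf.le_two_mul_of_half_le hc hθ hfc.ge hfθ le_rfl (by norm_num)
    rw [show (1 - 1 / 2 : ℝ) • c + (1 / 2 : ℝ) • θ = (c + θ) / 2 by simp only [smul_eq_mul]; ring]
      at hmid
    linarith
  have hcp : c < p := hp.1.lt_of_ne (by rintro rfl; linarith)
  rcases le_total p ((c + θ) / 2) with hle | hge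
  · have hpθ : 0 < θ - p := by linarith
    convert hf.le_two_mul_of_half_le hθ hp hfθ hfp.le (t := (θ - (c + θ) / 2) / (θ - p))
      (by rw [le_div_iff₀ hpθ]; linarith) (by rw [div_le_one hpθ]; linarith) using 3
    simp only [smul_eq_mul]; field_simp; ring
  · have hpc : 0 < p - c := by linarith
    convert hf.le_two_mul_of_half_le hc hp hfc.ge hfp.le (t := ((c + θ) / 2 - c) / (p - c))
      (by rw [le_div_iff₀ hpc]; linarith [hp.2]) (by rw [div_le_one hpc]; linarith) using 3
    simp only [smul_eq_mul]; field_simp; ring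

theorem profit_le_two_mul_midpoint {F π : ℝ → ℝ} {c θ p : ℝ} (hF1 : ∀ p, F p ≤ 1)
    (hπ : ∀ p, π p = (p - c) * (1 - F p)) (hconc : ConcaveOn ℝ (Icc 0 θ) π) (hc : 0 ≤ c)
    (hcθ : c ≤ θ) (hp : p ∈ Icc 0 θ) : π p ≤ 2 * π ((c + θ) / 2) := by
  have hπc : π c = 0 := by rw [hπ, sub_self, zero_mul]
  have hπθ : 0 ≤ π θ := by rw [hπ]; exact mul_nonneg (sub_nonneg.2 hcθ) (sub_nonneg.2 (hF1 θ))
  have hconc' := hconc.subset (Icc_subset_Icc_left hc) (convex_Icc c θ)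
  rcases le_total p c with hpc | hcp
  · have hπp : π p ≤ 0 := by
      rw [hπ]; exact mul_nonpos_of_nonpos_of_nonneg (sub_nonpos.2 hpc) (sub_nonneg.2 (hF1 p))
    linarith [hconc'.le_two_mul_midpoint hπc hπθ (left_mem_Icc.2 hcθ)]
  · exact hconc'.le_two_mul_midpoint hπc hπθ ⟨hcp, hp.2⟩

theorem uniform_price_half_approximation_general
    (K : ℕ) (α : Fin K → ℝ) (hα : ∀ k, 0 ≤ α k)
    (c θ : ℝ) (hc : 0 ≤ c) (hcθ : c < θ)
    (F : Fin K → ℝ → ℝ)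
    (hF1 : ∀ k p, F k p ≤ 1)
    (π : Fin K → ℝ → ℝ) (hπ : ∀ k p, π k p = (p - c) * (1 - F k p))
    (hconc : ∀ k, ConcaveOn ℝ (Set.Icc 0 θ) (π k)) :
    (∑ k, α k * π k ((c + θ) / 2)
        ≥ (1 / 2) * ∑ k, α k * sSup (π k '' Set.Icc 0 θ)) ∧
    (sSup ((fun p => ∑ k, α k * π k p) '' Set.Icc 0 θ)
        ≥ (1 / 2) * ∑ k, α k * sSup (π k '' Set.Icc 0 θ)) := by
  set ps := (c + θ) / 2 with hps
  have hpsmem : ps ∈ Icc 0 θ := ⟨by rw [hps]; linarith, by rw [hps]; linarith⟩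
  have hbound (k) : ∀ p ∈ Icc 0 θ, π k p ≤ 2 * π k ps := fun p hp =>
    profit_le_two_mul_midpoint (hF1 k) (hπ k) (hconc k) hc hcθ.le hp
  have hsSup (k) : sSup (π k '' Icc 0 θ) ≤ 2 * π k ps :=
    csSup_le ⟨_, mem_image_of_mem _ hpsmem⟩ (forall_mem_image.2 (hbound k))
  have hdisc : ∑ k, α k * π k ps ≥ (1 / 2) * ∑ k, α k * sSup (π k '' Icc 0 θ) := by
    rw [ge_iff_le, mul_sum]
    refine sum_le_sum fun k _ => ?_
    linarith [mul_le_mul_of_nonneg_left (hsSup k) (hα k)]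
  have hbdd : BddAbove ((fun p => ∑ k, α k * π k p) '' Icc 0 θ) := by
    refine ⟨∑ k, α k * (2 * π k ps), forall_mem_image.2 fun p hp => ?_⟩
    gcongr with k
    · exact hα k
    · exact hbound k p hp
  exact ⟨hdisc, hdisc.trans (le_csSup hbdd ⟨ps, hpsmem, rfl⟩)⟩

/-- **Uniform price is a half approximation.**
With `K ≥ 1` segments with weights `α k ≥ 0` summing to one, marginal cost
`0 ≤ c < θ̄`, CDFs `F k` (nondecreasing, with values in `[0,1]`) and concave
profit functions `π k p = (p - c) * (1 - F k p)` on the common support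
`[0, θ̄]`, the uniform price `p_s = (c + θ̄)/2` earns at least half of the
optimal third-degree price-discrimination profit; in particular the optimal
uniform-price profit is at least half of the discrimination profit. -/
theorem uniform_price_half_approximation
    (K : ℕ) (hK : 1 ≤ K) (α : Fin K → ℝ) (hα : ∀ k, 0 ≤ α k)
    (hsum : ∑ k, α k = 1)
    (c θ : ℝ) (hc : 0 ≤ c) (hcθ : c < θ)
    (F : Fin K → ℝ → ℝ) (hFmono : ∀ k, Monotone (F k))
    (hF0 : ∀ k p, 0 ≤ F k p) (hF1 : ∀ k p, F k p ≤ 1)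
    (π : Fin K → ℝ → ℝ) (hπ : ∀ k p, π k p = (p - c) * (1 - F k p))
    (hconc : ∀ k, ConcaveOn ℝ (Set.Icc 0 θ) (π k)) :
    (∑ k, α k * π k ((c + θ) / 2)
        ≥ (1 / 2) * ∑ k, α k * sSup (π k '' Set.Icc 0 θ)) ∧
    (sSup ((fun p => ∑ k, α k * π k p) '' Set.Icc 0 θ)
        ≥ (1 / 2) * ∑ k, α k * sSup (π k '' Set.Icc 0 θ)) :=
  uniform_price_half_approximation_general K α hα c θ hc hcθ F hF1 π hπ hconc
end

section
/- Let c < θ̄ be real numbers and let f : ℝ → ℝ be concave on the interval [c, θ̄] with f(c) = 0 and f(θ̄) ≥ 0. Then f((c + θ̄)/2) ≥ (1/2)·f(p) for every p ∈ [c, θ̄]. -/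
/-!
By the minimum principle `f ≥ min (f c) (f θ̄) = 0` on `[c, θ̄]`. The midpoint `m` lies between `p` and
the endpoint `q` on its far side, and is at least half as far from `q` as `p` is; so it is
`a • p + b • q` with `a ≥ 1/2`, and concavity gives `f m ≥ a f p + b f q ≥ f p / 2`.
-/

open Set

theorem ConcaveOn.half_le_of_mem_uIcc {𝕜 : Type*} [Field 𝕜] [LinearOrder 𝕜] [IsStrictOrderedRing 𝕜]
    {s : Set 𝕜} {f : 𝕜 → 𝕜} {p q m : 𝕜} (hf : ConcaveOn 𝕜 s f) (hp : p ∈ s) (hq : q ∈ s)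
    (hfp : 0 ≤ f p) (hfq : 0 ≤ f q) (hm : m ∈ uIcc p q) (hpq : |p - q| ≤ 2 * |m - q|) :
    f p / 2 ≤ f m := by
  rw [← segment_eq_uIcc] at hm
  obtain ⟨a, b, ha, hb, hab, rfl⟩ := hm
  rcases eq_or_ne p q with rfl | hne
  · rw [Convex.combo_self hab]
    linarith
  have hdist : |a • p + b • q - q| = a * |p - q| := by
    rw [← abs_of_nonneg ha, ← abs_mul, abs_of_nonneg ha, smul_eq_mul, smul_eq_mul,
      eq_sub_of_add_eq' hab]
    ring_nf
  have ha_half : 1 / 2 ≤ a := by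
    have : 0 < |p - q| := abs_pos.2 (sub_ne_zero.2 hne)
    nlinarith
  calc f p / 2 ≤ a * f p + b * f q := by nlinarith [mul_nonneg hb hfq]
    _ ≤ f (a • p + b • q) := hf.2 hp hq ha hb hab

theorem concave_midpoint_half_general
    (c θ : ℝ) (f : ℝ → ℝ)
    (hconc : ConcaveOn ℝ (Set.Icc c θ) f)
    (hfc : f c = 0) (hfθ : 0 ≤ f θ) :
    ∀ p ∈ Set.Icc c θ, f ((c + θ) / 2) ≥ (1 / 2) * f p := by
  intro p hp
  have hcθ : c ≤ θ := hp.1.trans hp.2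
  have hc : c ∈ Icc c θ := left_mem_Icc.2 hcθ
  have hθ : θ ∈ Icc c θ := right_mem_Icc.2 hcθ
  have hfp : 0 ≤ f p :=
    (le_min hfc.ge hfθ).trans (hconc.min_le_of_mem_Icc hc hθ hp)
  rw [ge_iff_le, one_div_mul_eq_div]
  rcases le_total p ((c + θ) / 2) with hpm | hmp
  · refine hconc.half_le_of_mem_uIcc hp hθ hfp hfθ ?_ ?_
    · rw [uIcc_of_le hp.2]; constructor <;> linarith
    · rw [abs_of_nonpos (by linarith), abs_of_nonpos (by linarith)]; linarith [hp.1, hp.2]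
  · refine hconc.half_le_of_mem_uIcc hp hc hfp hfc.ge ?_ ?_
    · rw [uIcc_of_ge hp.1]; constructor <;> linarith
    · rw [abs_of_nonneg (by linarith), abs_of_nonneg (by linarith)]; linarith [hp.1, hp.2]

/-- **Per-segment midpoint inequality.**
If `f` is concave on `[c, θ̄]` with `f c = 0` and `f θ̄ ≥ 0`, then the value of
`f` at the midpoint `(c + θ̄)/2` is at least half of `f p` for every
`p ∈ [c, θ̄]`. -/
theorem concave_midpoint_half
    (c θ : ℝ) (h : c < θ) (f : ℝ → ℝ)
    (hconc : ConcaveOn ℝ (Set.Icc c θ) f)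
    (hfc : f c = 0) (hfθ : 0 ≤ f θ) :
    ∀ p ∈ Set.Icc c θ, f ((c + θ) / 2) ≥ (1 / 2) * f p :=
  concave_midpoint_half_general c θ f hconc hfc hfθ
end

section
/- Let K ≥ 1, let α_1,…,α_K ≥ 0 with Σ_k α_k = 1, let 0 ≤ c < θ̄, and for each k let F_k : ℝ → ℝ be nondecreasing with values in [0,1] such that π_k(p) = (p − c)·(1 − F_k(p)) is concave on [0, θ̄]. Suppose for each k there exists p_k* ∈ [c, θ̄] attaining sup_{p ∈ [0,θ̄]} π_k(p). Then max_{j ∈ {1,…,K}} Σ_k α_k·π_k(p_j*) ≥ (1/2)·Σ_k α_k·π_k(p_k*); that is, some per-segment optimal price, used as a uniform price for all segments, earns at least half of the optimal third-degree price-discrimination profit. -/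
/-!
Shift prices by `c`: put `T = θ̄ - c`, `q k = p_k* - c` and `s k = 1 - F_k(p_k*)`, so that the
optimal profit of segment `k` is `s k * q k`. Monotonicity of `F_k` below `p_k*` and concavity of
`π_k` between `p_k*` and `θ̄` (where `π_k ≥ 0`) give `π_k(c + y) ≥ s k * tent T (q k) y`, with
`tent T a` the piecewise-linear function through `(0, 0)`, `(a, a)` and `(T, 0)`. It then suffices
to find `j` with `∑ k, α k * s k * tent T (q k) (q j) ≥ ½ ∑ k, α k * s k * q k`. Average over `j`,
weighting each `q j` by the length of its Voronoi cell in `[0, T]`: this trapezoid-type rule is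
exact between consecutive nodes, where every tent is linear, and overestimates on the two boundary
cells, so applied to `tent T (q k)` it gives at least `∫₀ᵀ tent T (q k) = T * q k / 2`.
-/

open Finset

noncomputable def tent (T a y : ℝ) : ℝ := if y ≤ a then y else a * (T - y) / (T - a)

lemma tent_of_le {T a y : ℝ} (h : y ≤ a) : tent T a y = y := if_pos h

lemma tent_nonneg {T a y : ℝ} (ha : 0 ≤ a) (hy : 0 ≤ y) (hyT : y ≤ T) : 0 ≤ tent T a y := by
  unfold tent
  split_ifs with h
  · exact hy
  · exact div_nonneg (mul_nonneg ha (by linarith)) (by linarith)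

lemma mul_sub_le_sub_mul_tent {T a y : ℝ} (hay : a ≤ y) (hyT : y ≤ T) :
    a * (T - y) ≤ (T - a) * tent T a y := by
  unfold tent
  split_ifs with h
  · rw [le_antisymm h hay, mul_comm]
  · rw [mul_div_cancel₀ _ (by linarith : T - a ≠ 0)]

lemma ConcaveOn.sub_mul_le_sub_mul {f : ℝ → ℝ} {s : Set ℝ} (hf : ConcaveOn ℝ s f) {a b x : ℝ}
    (ha : a ∈ s) (hb : b ∈ s) (hax : a ≤ x) (hxb : x ≤ b) (hfb : 0 ≤ f b) :
    (b - x) * f a ≤ (b - a) * f x := by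
  rcases hax.eq_or_lt with rfl | hlt
  · rfl
  have hba : 0 < b - a := by linarith
  have hcomb := hf.2 ha hb (div_nonneg (sub_nonneg.2 hxb) hba.le)
    (div_nonneg (sub_nonneg.2 hax) hba.le) (by field_simp; ring)
  rw [show ((b - x) / (b - a)) • a + ((x - a) / (b - a)) • b = x by
    simp only [smul_eq_mul]; field_simp; ring] at hcomb
  simp only [smul_eq_mul] at hcomb
  rw [div_mul_eq_mul_div, div_mul_eq_mul_div, ← add_div, div_le_iff₀ hba] at hcomb
  nlinarith [mul_nonneg (sub_nonneg.2 hax) hfb]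

lemma sum_Ico_sub_mul_eq_of_midpoint (t x : ℕ → ℝ) {m n : ℕ} (hmn : m < n)
    (ht : ∀ i, m < i → i < n → t i = (x (i - 1) + x i) / 2) :
    ∑ j ∈ Ico m n, (t (j + 1) - t j) * x j
      = t n * x (n - 1) - t m * x m - (x (n - 1) ^ 2 - x m ^ 2) / 2 := by
  induction n, hmn using Nat.le_induction with
  | base => rw [Nat.Ico_succ_singleton, sum_singleton, Nat.succ_sub_one]; ring
  | succ n hmn ih =>
    rw [sum_Ico_succ_top (by omega), ih fun i hi hin => ht i hi (by omega),
      ht n hmn (by omega)]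
    simp only [add_tsub_cancel_right]
    ring

/-- Cell `i` of the Voronoi partition of `[0, T]` by the sorted points `x 0 ≤ ⋯ ≤ x (K - 1)`
is `[cellEdge K T x i, cellEdge K T x (i + 1)]`. -/
noncomputable def cellEdge (K : ℕ) (T : ℝ) (x : ℕ → ℝ) (i : ℕ) : ℝ :=
  if i = 0 then 0 else if K ≤ i then T else (x (i - 1) + x i) / 2

section CellEdge

variable {K : ℕ} {T : ℝ} {x : ℕ → ℝ}

lemma cellEdge_zero : cellEdge K T x 0 = 0 := if_pos rfl

lemma cellEdge_self (hK : K ≠ 0) : cellEdge K T x K = T := by simp [cellEdge, hK]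

lemma cellEdge_of_lt {i : ℕ} (hi : i ≠ 0) (hiK : i < K) :
    cellEdge K T x i = (x (i - 1) + x i) / 2 := by
  simp [cellEdge, hi, hiK.not_ge]

lemma cellEdge_le_succ (hx : Monotone x) (hx0 : 0 ≤ x 0) (hxT : ∀ i, x i ≤ T) (i : ℕ) :
    cellEdge K T x i ≤ cellEdge K T x (i + 1) := by
  have h0T : 0 ≤ T := hx0.trans (hxT 0)
  unfold cellEdge
  rcases Nat.eq_zero_or_pos i with rfl | hi
  · have := hx (Nat.zero_le 1)
    split_ifs <;> first | omega | linarith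
  · have := hx (Nat.sub_le i 1)
    have := hx (by omega : i ≤ i + 1)
    have := hxT i
    have := hxT (i - 1)
    split_ifs <;> (try simp only [add_tsub_cancel_right]) <;> first | contradiction | omega | linarith

lemma sum_range_cellEdge_sub (hK : K ≠ 0) :
    ∑ j ∈ range K, (cellEdge K T x (j + 1) - cellEdge K T x j) = T := by
  rw [sum_range_sub, cellEdge_self hK, cellEdge_zero, sub_zero]

lemma sum_range_succ_cellEdge_mul_tent (hx : Monotone x) {k : ℕ} (hk : k < K) :
    ∑ j ∈ range (k + 1), (cellEdge K T x (j + 1) - cellEdge K T x j) * tent T (x k) (x j)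
      = cellEdge K T x (k + 1) * x k - (x k ^ 2 - x 0 ^ 2) / 2 := by
  rw [sum_congr rfl fun j hj => by rw [tent_of_le (hx (mem_range_succ_iff.1 hj))], range_eq_Ico,
    sum_Ico_sub_mul_eq_of_midpoint _ _ (by omega : 0 < k + 1)
      fun i hi hik => cellEdge_of_lt hi.ne' (by omega), cellEdge_zero]
  simp only [add_tsub_cancel_right]
  ring

lemma le_sum_Ico_cellEdge_mul_tent (hx : Monotone x) (hx0 : 0 ≤ x 0) (hxT : ∀ i, x i ≤ T)
    {k : ℕ} (hk : k + 1 < K) :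
    x k * (T - x (k + 1)) / 2
      ≤ ∑ j ∈ Ico (k + 1) K, (cellEdge K T x (j + 1) - cellEdge K T x j) * tent T (x k) (x j) := by
  set w : ℕ → ℝ := fun j => cellEdge K T x (j + 1) - cellEdge K T x j
  have hw : ∀ j, 0 ≤ w j := fun j => sub_nonneg.2 (cellEdge_le_succ hx hx0 hxT j)
  have hxk : 0 ≤ x k := hx0.trans (hx k.zero_le)
  rcases (hxT k).lt_or_eq with hlt | heq
  · have hsum : ∑ j ∈ Ico (k + 1) K, w j * (T - x j)
        = (T - x (K - 1)) ^ 2 / 2 + (T - x k) * (T - x (k + 1)) / 2 := by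
      simp only [mul_sub, sum_sub_distrib, ← sum_mul]
      rw [sum_Ico_sub (fun j => cellEdge K T x j) hk.le,
        sum_Ico_sub_mul_eq_of_midpoint _ _ hk fun i hi hiK => cellEdge_of_lt (by omega) hiK,
        cellEdge_self (by omega), cellEdge_of_lt (by omega) hk]
      simp only [add_tsub_cancel_right]
      ring
    refine le_of_mul_le_mul_left ?_ (sub_pos.2 hlt)
    calc (T - x k) * (x k * (T - x (k + 1)) / 2)
        ≤ x k * ∑ j ∈ Ico (k + 1) K, w j * (T - x j) := by
          rw [hsum]; nlinarith [sq_nonneg (T - x (K - 1))]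
      _ = ∑ j ∈ Ico (k + 1) K, w j * (x k * (T - x j)) := by
          rw [mul_sum]; exact sum_congr rfl fun j _ => by ring
      _ ≤ ∑ j ∈ Ico (k + 1) K, w j * ((T - x k) * tent T (x k) (x j)) :=
          sum_le_sum fun j hj => mul_le_mul_of_nonneg_left
            (mul_sub_le_sub_mul_tent (hx (by have := (mem_Ico.1 hj).1; omega)) (hxT j)) (hw j)
      _ = (T - x k) * ∑ j ∈ Ico (k + 1) K, w j * tent T (x k) (x j) := by
          rw [mul_sum]; exact sum_congr rfl fun j _ => by ring
  · have hk1 : x (k + 1) = T := le_antisymm (hxT _) (heq ▸ hx k.le_succ)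
    rw [hk1, sub_self, mul_zero, zero_div]
    exact sum_nonneg fun j _ =>
      mul_nonneg (hw j) (tent_nonneg hxk (hx0.trans (hx j.zero_le)) (hxT j))

lemma mul_half_le_sum_cellEdge_mul_tent (hx : Monotone x) (hx0 : 0 ≤ x 0) (hxT : ∀ i, x i ≤ T)
    {k : ℕ} (hk : k < K) :
    T * x k / 2
      ≤ ∑ j ∈ range K, (cellEdge K T x (j + 1) - cellEdge K T x j) * tent T (x k) (x j) := by
  rw [← sum_range_add_sum_Ico _ (show k + 1 ≤ K from hk), sum_range_succ_cellEdge_mul_tent hx hk]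
  have hxk : 0 ≤ x k := hx0.trans (hx k.zero_le)
  rcases (show k + 1 ≤ K from hk).lt_or_eq with hlt | heq
  · have htail := le_sum_Ico_cellEdge_mul_tent hx hx0 hxT hlt
    rw [cellEdge_of_lt (by omega) hlt, add_tsub_cancel_right]
    nlinarith [sq_nonneg (x 0)]
  · rw [heq, Ico_self, sum_empty, cellEdge_self (by omega)]
    nlinarith [hxT k, sq_nonneg (x 0)]

lemma exists_half_mul_sum_le_sum_tent_of_monotone (hK : K ≠ 0) (hT : 0 < T) (hx : Monotone x)
    (hx0 : 0 ≤ x 0) (hxT : ∀ i, x i ≤ T) (v : ℕ → ℝ) (hv : ∀ i < K, 0 ≤ v i) :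
    ∃ j < K, 1 / 2 * ∑ k ∈ range K, v k * x k ≤ ∑ k ∈ range K, v k * tent T (x k) (x j) := by
  set w : ℕ → ℝ := fun j => cellEdge K T x (j + 1) - cellEdge K T x j
  set g : ℕ → ℝ := fun j => ∑ k ∈ range K, v k * tent T (x k) (x j)
  obtain ⟨j, hj, hmax⟩ := exists_max_image (range K) g (nonempty_range_iff.2 hK)
  refine ⟨j, mem_range.1 hj, le_of_mul_le_mul_left ?_ hT⟩
  calc T * (1 / 2 * ∑ k ∈ range K, v k * x k)
      = ∑ k ∈ range K, v k * (T * x k / 2) := by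
        rw [mul_sum, mul_sum]; exact sum_congr rfl fun k _ => by ring
    _ ≤ ∑ k ∈ range K, v k * ∑ i ∈ range K, w i * tent T (x k) (x i) :=
        sum_le_sum fun k hk => mul_le_mul_of_nonneg_left
          (mul_half_le_sum_cellEdge_mul_tent hx hx0 hxT (mem_range.1 hk)) (hv k (mem_range.1 hk))
    _ = ∑ i ∈ range K, w i * g i := by
        simp only [g, mul_sum]
        rw [sum_comm]
        exact sum_congr rfl fun _ _ => sum_congr rfl fun _ _ => by ring
    _ ≤ ∑ i ∈ range K, w i * g j :=
        sum_le_sum fun i hi => mul_le_mul_of_nonneg_left (hmax i hi)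
          (sub_nonneg.2 (cellEdge_le_succ hx hx0 hxT i))
    _ = T * g j := by rw [← sum_mul, sum_range_cellEdge_sub hK]

end CellEdge

theorem exists_half_mul_sum_le_sum_tent {K : ℕ} (hK : K ≠ 0) {T : ℝ} (hT : 0 < T)
    (q v : Fin K → ℝ) (hq0 : ∀ k, 0 ≤ q k) (hqT : ∀ k, q k ≤ T) (hv : ∀ k, 0 ≤ v k) :
    ∃ j, 1 / 2 * ∑ k, v k * q k ≤ ∑ k, v k * tent T (q k) (q j) := by
  set σ := Tuple.sort q
  set x : ℕ → ℝ := fun i => if h : i < K then q (σ ⟨i, h⟩) else T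
  set w : ℕ → ℝ := fun i => if h : i < K then v (σ ⟨i, h⟩) else 0
  have hx_coe (i : Fin K) : x i = q (σ i) := dif_pos i.isLt
  have hw_coe (i : Fin K) : w i = v (σ i) := dif_pos i.isLt
  have hx : Monotone x := by
    intro i j hij
    simp only [x]
    split_ifs with hi hj hj
    · exact Tuple.monotone_sort q (show (⟨i, hi⟩ : Fin K) ≤ ⟨j, hj⟩ from hij)
    · exact hqT _
    · omega
    · rfl
  have hxT (i : ℕ) : x i ≤ T := by
    simp only [x]; split_ifs
    · exact hqT _
    · rfl
  obtain ⟨j, hjK, hj⟩ := exists_half_mul_sum_le_sum_tent_of_monotone hK hT hx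
    (by simp only [x, dif_pos (Nat.pos_of_ne_zero hK)]; exact hq0 _) hxT w
    fun i hi => by simp only [w, dif_pos hi]; exact hv _
  refine ⟨σ ⟨j, hjK⟩, ?_⟩
  rw [← Fin.sum_univ_eq_sum_range (fun i => w i * x i),
    ← Fin.sum_univ_eq_sum_range (fun i => w i * tent T (x i) (x j))] at hj
  simp only [hx_coe, hw_coe, show x j = q (σ ⟨j, hjK⟩) from dif_pos hjK] at hj
  rwa [Equiv.sum_comp σ (fun k => v k * q k),
    Equiv.sum_comp σ (fun k => v k * tent T (q k) (q (σ ⟨j, hjK⟩)))] at hj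

lemma mul_tent_le_of_concaveOn {F : ℝ → ℝ} (hF : Monotone F) (hF1 : ∀ p, F p ≤ 1) {c θ : ℝ}
    (hc : 0 ≤ c) (hconc : ConcaveOn ℝ (Set.Icc 0 θ) fun p => (p - c) * (1 - F p))
    {p₀ p : ℝ} (hp₀ : p₀ ∈ Set.Icc c θ) (hp : p ∈ Set.Icc c θ) :
    (1 - F p₀) * tent (θ - c) (p₀ - c) (p - c) ≤ (p - c) * (1 - F p) := by
  unfold tent
  split_ifs with h
  · rw [mul_comm]
    exact mul_le_mul_of_nonneg_left (by linarith [hF (by linarith : p ≤ p₀)])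
      (sub_nonneg.2 hp.1)
  · have hchord := hconc.sub_mul_le_sub_mul ⟨hc.trans hp₀.1, hp₀.2⟩
      (Set.right_mem_Icc.2 (hc.trans hp.1 |>.trans hp.2)) (by linarith) hp.2
      (mul_nonneg (by linarith [hp.2, hp.1]) (sub_nonneg.2 (hF1 θ)))
    rw [show θ - c - (p₀ - c) = θ - p₀ by ring, show θ - c - (p - c) = θ - p by ring,
      mul_div_assoc', div_le_iff₀ (by linarith [hp.2, not_le.1 h])]
    linarith

theorem some_segment_price_half_approximation_general
    (K : ℕ) (hK : 1 ≤ K) (α : Fin K → ℝ) (hα : ∀ k, 0 ≤ α k)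
    (c θ : ℝ) (hc : 0 ≤ c) (hcθ : c < θ)
    (F : Fin K → ℝ → ℝ) (hFmono : ∀ k, Monotone (F k))
    (hF1 : ∀ k p, F k p ≤ 1)
    (π : Fin K → ℝ → ℝ) (hπ : ∀ k p, π k p = (p - c) * (1 - F k p))
    (hconc : ∀ k, ConcaveOn ℝ (Set.Icc 0 θ) (π k))
    (pstar : Fin K → ℝ) (hps : ∀ k, pstar k ∈ Set.Icc c θ) :
    ∃ j : Fin K, ∑ k, α k * π k (pstar j)
        ≥ (1 / 2) * ∑ k, α k * π k (pstar k) := by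
  obtain rfl : π = fun k p => (p - c) * (1 - F k p) := funext fun k => funext (hπ k)
  obtain ⟨j, hj⟩ := exists_half_mul_sum_le_sum_tent (by omega) (sub_pos.2 hcθ)
    (fun k => pstar k - c) (fun k => α k * (1 - F k (pstar k)))
    (fun k => sub_nonneg.2 (hps k).1) (fun k => by linarith [(hps k).2])
    (fun k => mul_nonneg (hα k) (sub_nonneg.2 (hF1 k _)))
  refine ⟨j, ?_⟩
  calc 1 / 2 * ∑ k, α k * ((pstar k - c) * (1 - F k (pstar k)))
      = 1 / 2 * ∑ k, α k * (1 - F k (pstar k)) * (pstar k - c) := by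
        simp only [mul_comm (pstar _ - c), mul_assoc]
    _ ≤ ∑ k, α k * (1 - F k (pstar k)) * tent (θ - c) (pstar k - c) (pstar j - c) := hj
    _ ≤ ∑ k, α k * ((pstar j - c) * (1 - F k (pstar j))) := sum_le_sum fun k _ => by
        rw [mul_assoc]
        exact mul_le_mul_of_nonneg_left
          (mul_tent_le_of_concaveOn (hFmono k) (hF1 k) hc (hconc k) (hps k) (hps j)) (hα k)

/-- **Some per-segment optimal price is a half-approximating uniform price.**
With concave profit functions `π k p = (p - c) * (1 - F k p)` on the common
support `[0, θ̄]` and per-segment optimal prices `pstar k ∈ [c, θ̄]`, some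
per-segment optimal price, used as a uniform price for all segments, earns at
least half of the optimal third-degree price-discrimination profit. -/
theorem some_segment_price_half_approximation
    (K : ℕ) (hK : 1 ≤ K) (α : Fin K → ℝ) (hα : ∀ k, 0 ≤ α k)
    (hsum : ∑ k, α k = 1)
    (c θ : ℝ) (hc : 0 ≤ c) (hcθ : c < θ)
    (F : Fin K → ℝ → ℝ) (hFmono : ∀ k, Monotone (F k))
    (hF0 : ∀ k p, 0 ≤ F k p) (hF1 : ∀ k p, F k p ≤ 1)
    (π : Fin K → ℝ → ℝ) (hπ : ∀ k p, π k p = (p - c) * (1 - F k p))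
    (hconc : ∀ k, ConcaveOn ℝ (Set.Icc 0 θ) (π k))
    (pstar : Fin K → ℝ) (hps : ∀ k, pstar k ∈ Set.Icc c θ)
    (hopt : ∀ k, ∀ p ∈ Set.Icc (0:ℝ) θ, π k p ≤ π k (pstar k)) :
    ∃ j : Fin K, ∑ k, α k * π k (pstar j)
        ≥ (1 / 2) * ∑ k, α k * π k (pstar k) :=
  some_segment_price_half_approximation_general K hK α hα c θ hc hcθ F hFmono hF1 π hπ hconc pstar
    hps
end

section
/- Let a < b be real numbers and let f : ℝ → ℝ be concave on [a, b] with f(a) ≥ 0 and f(b) ≥ 0. Then for every p ∈ [a, b], ∫_a^b f(x) dx ≥ (b − a)·f(p)/2; i.e., the integral of f over [a, b] is at least the area of the triangle with base [a, b] and apex (p, f(p)). -/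
/-!
Split `[a, b]` at `p`. On each piece the integral of a concave function is at least the area of
the trapezoid under its chord (the concave half of the Hermite–Hadamard inequality). Since
`f a, f b ≥ 0`, the two trapezoids over `[a, p]` and `[p, b]` contain the triangle with apex
`(p, f p)`.
-/

open intervalIntegral

open Set MeasureTheory

section
variable {s : Set ℝ} {g : ℝ → ℝ} {u v x : ℝ}

theorem ConcaveOn.chord_le (hg : ConcaveOn ℝ s g) (hu : u ∈ s) (hv : v ∈ s) (hx : x ∈ Icc u v) :
    (v - x) * g u + (x - u) * g v ≤ (v - u) * g x := by
  rcases hx.1.eq_or_lt with rfl | hux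
  · linarith
  have huv : 0 < v - u := by linarith [hx.2]
  have key := hg.2 hu hv (div_nonneg (sub_nonneg.2 hx.2) huv.le)
    (div_nonneg (sub_nonneg.2 hux.le) huv.le) (by field_simp; ring)
  have hpt : (v - x) / (v - u) * u + (x - u) / (v - u) * v = x := by field_simp; ring
  simp only [smul_eq_mul, hpt] at key
  rw [div_mul_eq_mul_div, div_mul_eq_mul_div, ← add_div, div_le_iff₀ huv] at key
  linarith

theorem ConcaveOn.bddBelow_image_Icc (hg : ConcaveOn ℝ (Icc u v) g) : BddBelow (g '' Icc u v) := by
  rcases lt_or_ge v u with hvu | huv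
  · simp [Icc_eq_empty_of_lt hvu]
  refine ⟨min (g u) (g v), forall_mem_image.2 fun x hx => ?_⟩
  exact hg.ge_on_segment (left_mem_Icc.2 huv) (right_mem_Icc.2 huv) (by rwa [segment_eq_Icc huv])

theorem ConcaveOn.bddAbove_image_Icc (hg : ConcaveOn ℝ (Icc u v) g) : BddAbove (g '' Icc u v) := by
  obtain ⟨L, hL⟩ := hg.bddBelow_image_Icc
  refine ⟨2 * g ((u + v) / 2) - L, forall_mem_image.2 fun x hx => ?_⟩
  -- the midpoint of `[u, v]` is also the midpoint of `x` and its reflection `u + v - x`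
  have hx' : u + v - x ∈ Icc u v := ⟨by linarith [hx.2], by linarith [hx.1]⟩
  have hmid := hg.2 hx hx' (by norm_num : (0 : ℝ) ≤ 1 / 2) (by norm_num : (0 : ℝ) ≤ 1 / 2)
    (by norm_num)
  simp only [smul_eq_mul] at hmid
  rw [show 1 / 2 * x + 1 / 2 * (u + v - x) = (u + v) / 2 by ring] at hmid
  linarith [hL (mem_image_of_mem g hx')]

theorem ConcaveOn.intervalIntegrable (hg : ConcaveOn ℝ (Icc u v) g) (huv : u ≤ v) :
    IntervalIntegrable g volume u v := by
  rw [intervalIntegrable_iff_integrableOn_Ioo_of_le huv]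
  have hcont : ContinuousOn g (Ioo u v) := by
    simpa only [interior_Icc] using hg.continuousOn_interior
  obtain ⟨M, hM⟩ := (isBounded_iff_bddBelow_bddAbove.2
    ⟨hg.bddBelow_image_Icc, hg.bddAbove_image_Icc⟩).exists_norm_le
  refine IntegrableOn.of_bound measure_Ioo_lt_top (hcont.aestronglyMeasurable measurableSet_Ioo) M ?_
  filter_upwards [ae_restrict_mem measurableSet_Ioo] with x hx
  exact hM _ (mem_image_of_mem g (Ioo_subset_Icc_self hx))

theorem intervalIntegral.integral_sub_mul_add_sub_mul (u v c d : ℝ) :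
    ∫ x in u..v, ((v - x) * c + (x - u) * d) = (v - u) ^ 2 * (c + d) / 2 := by
  rw [integral_add, integral_mul_const, integral_mul_const, integral_sub, integral_sub,
    integral_id, integral_const, integral_const, smul_eq_mul, smul_eq_mul]
  · ring
  all_goals exact Continuous.intervalIntegrable (by fun_prop) u v

theorem ConcaveOn.mul_add_div_two_le_integral (hg : ConcaveOn ℝ (Icc u v) g) (huv : u ≤ v) :
    (v - u) * (g u + g v) / 2 ≤ ∫ x in u..v, g x := by
  rcases huv.eq_or_lt with rfl | huv
  · simp
  have hchord : ∫ x in u..v, ((v - x) * g u + (x - u) * g v) ≤ ∫ x in u..v, (v - u) * g x :=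
    integral_mono_on huv.le (Continuous.intervalIntegrable (by fun_prop) u v)
      ((hg.intervalIntegrable huv.le).const_mul _)
      fun x hx => hg.chord_le (left_mem_Icc.2 huv.le) (right_mem_Icc.2 huv.le) hx
  rw [integral_sub_mul_add_sub_mul, intervalIntegral.integral_const_mul] at hchord
  have hpos : 0 < v - u := by linarith
  nlinarith

end

theorem concave_integral_triangle_bound_general
    (a b : ℝ) (f : ℝ → ℝ)
    (hconc : ConcaveOn ℝ (Set.Icc a b) f)
    (hfa : 0 ≤ f a) (hfb : 0 ≤ f b) :
    ∀ p ∈ Set.Icc a b, (∫ x in a..b, f x) ≥ (b - a) * f p / 2 := by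
  intro p hp
  have hleft := hconc.subset (Icc_subset_Icc_right hp.2) (convex_Icc a p)
  have hright := hconc.subset (Icc_subset_Icc_left hp.1) (convex_Icc p b)
  rw [← integral_add_adjacent_intervals (hleft.intervalIntegrable hp.1)
    (hright.intervalIntegrable hp.2)]
  have htrap_left := hleft.mul_add_div_two_le_integral hp.1
  have htrap_right := hright.mul_add_div_two_le_integral hp.2
  nlinarith [mul_nonneg (sub_nonneg.2 hp.1) hfa, mul_nonneg (sub_nonneg.2 hp.2) hfb]

/-- **Triangle lower bound for the integral of a concave function.**
If `f` is concave on `[a, b]` with `f a ≥ 0` and `f b ≥ 0`, then for every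
`p ∈ [a, b]` the integral of `f` over `[a, b]` is at least the area
`(b - a) * f p / 2` of the triangle with base `[a, b]` and apex `(p, f p)`. -/
theorem concave_integral_triangle_bound
    (a b : ℝ) (hab : a < b) (f : ℝ → ℝ)
    (hconc : ConcaveOn ℝ (Set.Icc a b) f)
    (hfa : 0 ≤ f a) (hfb : 0 ≤ f b) :
    ∀ p ∈ Set.Icc a b, (∫ x in a..b, f x) ≥ (b - a) * f p / 2 :=
  concave_integral_triangle_bound_general a b f hconc hfa hfb
end

section
/- Let K ≥ 1, let α_1,…,α_K ≥ 0 with Σ_k α_k = 1, let 0 ≤ c < θ̄, and for each k let F_k : ℝ → ℝ be nondecreasing with values in [0,1] such that π_k(p) = (p − c)·(1 − F_k(p)) is concave on [0, θ̄]. Then the expected profit of a uniform price drawn uniformly at random from [c, θ̄] is at least half of the optimal third-degree price-discrimination profit: (1/(θ̄ − c))·∫_c^{θ̄} Σ_k α_k·π_k(p) dp ≥ (1/2)·Σ_k α_k·(sup_{p ∈ [c,θ̄]} π_k(p)). -/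
/-!
For any price `q`, a concave profit function `π` lies above the tent with vertices `(c, π c)`,
`(q, π q)` and `(θ̄, π θ̄)` on `[c, θ̄]`. Since `π c = 0 ≤ π θ̄`, the tent has area at least
`(θ̄ - c) π q / 2`, so the average of `π` over `[c, θ̄]` is at least half its supremum there;
summing over the segments with the weights `α` gives the bound.
-/

open intervalIntegral MeasureTheory Set

lemma ConcaveOn.secant_le {f : ℝ → ℝ} {a b x : ℝ} (hf : ConcaveOn ℝ (Icc a b) f)
    (hx : x ∈ Icc a b) : (b - x) * f a + (x - a) * f b ≤ (b - a) * f x := by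
  rcases hx.1.eq_or_lt with rfl | hax
  · exact le_of_eq (by ring)
  rcases hx.2.eq_or_lt with rfl | hxb
  · exact le_of_eq (by ring)
  have := hf.neg.secant_mono_aux1 (left_mem_Icc.2 (hax.trans hxb).le)
    (right_mem_Icc.2 (hax.trans hxb).le) hax hxb
  simp only [Pi.neg_apply] at this
  linarith

lemma ConcaveOn.trapezoid_le_integral {f : ℝ → ℝ} {a b : ℝ} (hab : a ≤ b)
    (hf : ConcaveOn ℝ (Icc a b) f) (hint : IntervalIntegrable f volume a b) :
    (b - a) * (f a + f b) / 2 ≤ ∫ x in a..b, f x := by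
  have hderiv : ∀ x, HasDerivAt (fun x => (x - a) ^ 2 / 2 * f b - (b - x) ^ 2 / 2 * f a)
      ((b - x) * f a + (x - a) * f b) x := fun x => by
    refine (((((hasDerivAt_id' x).sub_const a).fun_pow 2).div_const 2 |>.mul_const (f b)).fun_sub
      ((((hasDerivAt_id' x).const_sub b).fun_pow 2).div_const 2 |>.mul_const (f a))).congr_deriv ?_
    ring
  have hsecant_int : IntervalIntegrable (fun x => (b - x) * f a + (x - a) * f b) volume a b :=
    (by fun_prop : Continuous _).intervalIntegrable a b
  have hsecant : ∫ x in a..b, ((b - x) * f a + (x - a) * f b) = (b - a) ^ 2 * (f a + f b) / 2 := by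
    rw [integral_eq_sub_of_hasDerivAt (fun x _ => hderiv x) hsecant_int]
    ring
  have hmono : ∫ x in a..b, ((b - x) * f a + (x - a) * f b) ≤ (b - a) * ∫ x in a..b, f x := by
    rw [← intervalIntegral.integral_const_mul]
    exact integral_mono_on hab hsecant_int (hint.const_mul _) fun x hx => hf.secant_le hx
  rcases hab.eq_or_lt with rfl | hab
  · simp
  nlinarith

lemma ConcaveOn.mul_le_two_mul_integral {f : ℝ → ℝ} {a b q : ℝ} (hf : ConcaveOn ℝ (Icc a b) f)
    (hint : IntervalIntegrable f volume a b) (ha : 0 ≤ f a) (hb : 0 ≤ f b) (hq : q ∈ Icc a b) :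
    (b - a) * f q ≤ 2 * ∫ x in a..b, f x := by
  have hint_left : IntervalIntegrable f volume a q :=
    hint.mono_set (uIcc_subset_uIcc_left (Icc_subset_uIcc hq))
  have hint_right : IntervalIntegrable f volume q b :=
    hint.mono_set (uIcc_subset_uIcc_right (Icc_subset_uIcc hq))
  have hleft := (hf.subset (Icc_subset_Icc le_rfl hq.2) (convex_Icc a q)).trapezoid_le_integral
    hq.1 hint_left
  have hright := (hf.subset (Icc_subset_Icc hq.1 le_rfl) (convex_Icc q b)).trapezoid_le_integral
    hq.2 hint_right
  rw [← integral_add_adjacent_intervals hint_left hint_right]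
  nlinarith [mul_nonneg (sub_nonneg.2 hq.1) ha, mul_nonneg (sub_nonneg.2 hq.2) hb]

lemma ConcaveOn.sSup_image_Icc_le {f : ℝ → ℝ} {a b : ℝ} (hab : a < b)
    (hf : ConcaveOn ℝ (Icc a b) f) (hint : IntervalIntegrable f volume a b) (ha : 0 ≤ f a)
    (hb : 0 ≤ f b) : sSup (f '' Icc a b) ≤ 2 / (b - a) * ∫ x in a..b, f x := by
  have hbound : ∀ q ∈ Icc a b, f q ≤ 2 / (b - a) * ∫ x in a..b, f x := fun q hq => by
    rw [div_mul_eq_mul_div, le_div_iff₀ (sub_pos.2 hab), mul_comm]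
    exact hf.mul_le_two_mul_integral hint ha hb hq
  refine Real.sSup_le (forall_mem_image.2 hbound) ?_
  exact ha.trans (hbound a (left_mem_Icc.2 hab.le))

lemma intervalIntegrable_sub_mul_one_sub {F : ℝ → ℝ} (hF : Monotone F) (c a b : ℝ) :
    IntervalIntegrable (fun p => (p - c) * (1 - F p)) volume a b := by
  have hanti : Antitone fun p => 1 - F p := fun _ _ hpq => sub_le_sub_left (hF hpq) 1
  exact hanti.intervalIntegrable.continuousOn_mul (by fun_prop)

theorem random_uniform_price_half_approximation_general
    (K : ℕ) (α : Fin K → ℝ) (hα : ∀ k, 0 ≤ α k)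
    (c θ : ℝ) (hc : 0 ≤ c) (hcθ : c < θ)
    (F : Fin K → ℝ → ℝ) (hFmono : ∀ k, Monotone (F k))
    (hF1 : ∀ k p, F k p ≤ 1)
    (π : Fin K → ℝ → ℝ) (hπ : ∀ k p, π k p = (p - c) * (1 - F k p))
    (hconc : ∀ k, ConcaveOn ℝ (Set.Icc 0 θ) (π k)) :
    (1 / (θ - c)) * (∫ p in c..θ, ∑ k, α k * π k p)
      ≥ (1 / 2) * ∑ k, α k * sSup (π k '' Set.Icc c θ) := by
  have hint k : IntervalIntegrable (π k) volume c θ :=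
    funext (hπ k) ▸ intervalIntegrable_sub_mul_one_sub (hFmono k) c c θ
  have hsSup k : sSup (π k '' Icc c θ) ≤ 2 / (θ - c) * ∫ p in c..θ, π k p :=
    ((hconc k).subset (Icc_subset_Icc hc le_rfl) (convex_Icc c θ)).sSup_image_Icc_le hcθ (hint k)
      (by simp [hπ]) (by rw [hπ]; exact mul_nonneg (by linarith) (by linarith [hF1 k θ]))
  rw [integral_finsetSum fun k _ => (hint k).const_mul (α k)]
  calc (1 / 2) * ∑ k, α k * sSup (π k '' Icc c θ)
      ≤ (1 / 2) * ∑ k, α k * (2 / (θ - c) * ∫ p in c..θ, π k p) := by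
        gcongr with k
        exacts [hα k, hsSup k]
    _ = (1 / (θ - c)) * ∑ k, ∫ p in c..θ, α k * π k p := by
        simp only [intervalIntegral.integral_const_mul, Finset.mul_sum]
        congr! 1 with k
        ring

/-- **Pricing uniformly at random is a half approximation in expectation.**
With concave profit functions `π k p = (p - c) * (1 - F k p)` on the common
support `[0, θ̄]`, the expected aggregate profit of a uniform price drawn
uniformly at random from `[c, θ̄]` is at least half of the optimal third-degree
price-discrimination profit. -/
theorem random_uniform_price_half_approximation
    (K : ℕ) (hK : 1 ≤ K) (α : Fin K → ℝ) (hα : ∀ k, 0 ≤ α k)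
    (hsum : ∑ k, α k = 1)
    (c θ : ℝ) (hc : 0 ≤ c) (hcθ : c < θ)
    (F : Fin K → ℝ → ℝ) (hFmono : ∀ k, Monotone (F k))
    (hF0 : ∀ k p, 0 ≤ F k p) (hF1 : ∀ k p, F k p ≤ 1)
    (π : Fin K → ℝ → ℝ) (hπ : ∀ k p, π k p = (p - c) * (1 - F k p))
    (hconc : ∀ k, ConcaveOn ℝ (Set.Icc 0 θ) (π k)) :
    (1 / (θ - c)) * (∫ p in c..θ, ∑ k, α k * π k p)
      ≥ (1 / 2) * ∑ k, α k * sSup (π k '' Set.Icc c θ) :=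
  random_uniform_price_half_approximation_general K α hα c θ hc hcθ F hFmono hF1 π hπ hconc
end

section
/- Let K ≥ 1, let α_1,…,α_K ≥ 0 with Σ_k α_k = 1, and for each k let F_k : ℝ → ℝ be nondecreasing with values in [0,1] and with F_k(p) < 1 for every p ≥ 0 (so every segment has unbounded support ℝ₊). Suppose, with c = 0, each profit function π_k(p) = p·(1 − F_k(p)) is concave on [0, ∞). Then there is no gap between uniform pricing and third-degree price discrimination: sup_{p ≥ 0} Σ_k α_k·π_k(p) = Σ_k α_k·(sup_{p ≥ 0} π_k(p)), where both sides may equal +∞. -/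
/-!
A nonnegative concave function on `[0, ∞)` is nondecreasing, so every segment profit `π k`
is monotone. For monotone families on a directed set the supremum of a finite sum is the sum
of the suprema; since all profits are nonnegative this can be computed in `ℝ≥0∞`, where
it holds even when some suprema are infinite, and transferred to `EReal`.
-/

open Set
open scoped ENNReal

theorem ConcaveOn.monotoneOn_of_bddBelow {𝕜 : Type*} [Field 𝕜] [LinearOrder 𝕜]
    [IsStrictOrderedRing 𝕜] {f : 𝕜 → 𝕜} {a : 𝕜} (hf : ConcaveOn 𝕜 (Ici a) f)
    (hbdd : BddBelow (f '' Ici a)) : MonotoneOn f (Ici a) := by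
  obtain ⟨m, hm⟩ := hbdd
  intro x hx y hy hxy
  by_contra! hdrop
  have hxy : x < y := hxy.lt_of_ne (by rintro rfl; exact hdrop.false)
  set s := (f y - f x) / (y - x)
  have hs_neg : s < 0 := div_neg_of_neg_of_pos (sub_neg.2 hdrop) (sub_pos.2 hxy)
  have hfy : m ≤ f y := hm (mem_image_of_mem f hy)
  -- Past `y` the graph stays below the chord through `x` and `y`, whose slope is negative.
  set z := y + (f y - m + 1) / -s
  have hyz : y < z := lt_add_of_pos_right y (div_pos (by linarith) (neg_pos.2 hs_neg))
  have hz : z ∈ Ici a := le_trans hy hyz.le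
  have hslope := hf.slope_anti_adjacent hx hz hxy hyz
  have hfz : f z - f y ≤ -(f y - m + 1) := calc
    f z - f y ≤ s * (z - y) := (div_le_iff₀ (sub_pos.2 hyz)).1 hslope
    _ = -(f y - m + 1) := by simp only [z, add_sub_cancel_left]; field_simp [hs_neg.ne]
  linarith [hm (mem_image_of_mem f hz)]

namespace EReal

theorem coe_ennreal_finsetSum {α : Type*} (s : Finset α) (f : α → ℝ≥0∞) :
    ((∑ a ∈ s, f a : ℝ≥0∞) : EReal) = ∑ a ∈ s, (f a : EReal) :=
  map_sum (⟨⟨(↑), coe_ennreal_zero⟩, coe_ennreal_add⟩ : ℝ≥0∞ →+ EReal) f s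

theorem coe_ennreal_iSup {ι : Sort*} [Nonempty ι] (f : ι → ℝ≥0∞) :
    ((⨆ i, f i : ℝ≥0∞) : EReal) = ⨆ i, (f i : EReal) :=
  Monotone.map_ciSup_of_continuousAt continuous_coe_ennreal_ereal.continuousAt
    (fun _ _ h => coe_ennreal_le_coe_ennreal_iff.2 h)

theorem coe_eq_coe_ennreal_ofReal {x : ℝ} (hx : 0 ≤ x) :
    (x : EReal) = (ENNReal.ofReal x : EReal) := by
  rw [coe_ennreal_ofReal, max_eq_left hx]

theorem coe_mul_iSup_coe {ι : Sort*} [Nonempty ι] {c : ℝ} (hc : 0 ≤ c) {g : ι → ℝ}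
    (hg : ∀ i, 0 ≤ g i) : (c : EReal) * ⨆ i, (g i : EReal) = ⨆ i, ((c * g i : ℝ) : EReal) := by
  simp_rw [coe_eq_coe_ennreal_ofReal hc, coe_eq_coe_ennreal_ofReal (hg _),
    coe_eq_coe_ennreal_ofReal (mul_nonneg hc (hg _)), ENNReal.ofReal_mul hc, ← coe_ennreal_iSup,
    ← coe_ennreal_mul, ENNReal.mul_iSup]

theorem iSup_coe_finsetSum_of_monotone {ι α : Type*} [Preorder ι] [IsDirectedOrder ι]
    [Nonempty ι] (s : Finset α) {f : α → ι → ℝ} (hf : ∀ a, Monotone (f a))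
    (hf0 : ∀ a i, 0 ≤ f a i) :
    ⨆ i, ((∑ a ∈ s, f a i : ℝ) : EReal) = ∑ a ∈ s, ⨆ i, (f a i : EReal) := by
  simp_rw [coe_eq_coe_ennreal_ofReal (Finset.sum_nonneg fun a _ => hf0 a _),
    coe_eq_coe_ennreal_ofReal (hf0 _ _), ENNReal.ofReal_sum_of_nonneg fun a _ => hf0 a _,
    ← coe_ennreal_iSup, ← coe_ennreal_finsetSum]
  congr 1
  exact (ENNReal.finsetSum_iSup_of_monotone fun a => ENNReal.ofReal_mono.comp (hf a)).symm

end EReal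

theorem zero_gap_unbounded_support_general
    (K : ℕ) (α : Fin K → ℝ) (hα : ∀ k, 0 ≤ α k)
    (F : Fin K → ℝ → ℝ)
    (hF1 : ∀ k p, F k p ≤ 1)
    (π : Fin K → ℝ → ℝ) (hπ : ∀ k p, π k p = p * (1 - F k p))
    (hconc : ∀ k, ConcaveOn ℝ (Set.Ici 0) (π k)) :
    (⨆ p : Set.Ici (0:ℝ), ((∑ k, α k * π k ↑p : ℝ) : EReal))
      = ∑ k, ((α k : ℝ) : EReal) * ⨆ p : Set.Ici (0:ℝ), ((π k ↑p : ℝ) : EReal) := by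
  have hπ_nonneg : ∀ k, ∀ p ∈ Ici (0 : ℝ), 0 ≤ π k p := fun k p hp => by
    rw [hπ]; exact mul_nonneg hp (sub_nonneg.2 (hF1 k p))
  have hπ_mono : ∀ k, Monotone fun p : Ici (0 : ℝ) => π k p := fun k =>
    monotoneOn_iff_monotone.1 <| (hconc k).monotoneOn_of_bddBelow
      ⟨0, forall_mem_image.2 (hπ_nonneg k)⟩
  rw [EReal.iSup_coe_finsetSum_of_monotone _ (fun k => (hπ_mono k).const_mul (hα k))
    fun k (p : Ici (0 : ℝ)) => mul_nonneg (hα k) (hπ_nonneg k p p.2)]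
  exact Finset.sum_congr rfl fun k _ =>
    (EReal.coe_mul_iSup_coe (hα k) fun p : Ici (0 : ℝ) => hπ_nonneg k p p.2).symm

/-- **Zero profit gap with unbounded support.**
If every segment's CDF satisfies `F k p < 1` for all `p ≥ 0` (unbounded
support `ℝ₊`) and each profit function `π k p = p * (1 - F k p)` (marginal
cost `c = 0`) is concave on `[0, ∞)`, then the optimal uniform-price profit
equals the optimal third-degree price-discrimination profit (both computed in
the extended reals, as either side may be `+∞`). -/
theorem zero_gap_unbounded_support
    (K : ℕ) (hK : 1 ≤ K) (α : Fin K → ℝ) (hα : ∀ k, 0 ≤ α k)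
    (hsum : ∑ k, α k = 1)
    (F : Fin K → ℝ → ℝ) (hFmono : ∀ k, Monotone (F k))
    (hF0 : ∀ k p, 0 ≤ F k p) (hF1 : ∀ k p, F k p ≤ 1)
    (hFlt : ∀ k, ∀ p : ℝ, 0 ≤ p → F k p < 1)
    (π : Fin K → ℝ → ℝ) (hπ : ∀ k p, π k p = p * (1 - F k p))
    (hconc : ∀ k, ConcaveOn ℝ (Set.Ici 0) (π k)) :
    (⨆ p : Set.Ici (0:ℝ), ((∑ k, α k * π k ↑p : ℝ) : EReal))
      = ∑ k, ((α k : ℝ) : EReal) * ⨆ p : Set.Ici (0:ℝ), ((π k ↑p : ℝ) : EReal) :=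
  zero_gap_unbounded_support_general K α hα F hF1 π hπ hconc
end

section
/- Fix K ≥ 1 and set v_k = 1/(K − k + 1) and α_k = 1/K for k = 1,…,K. Choose any ε_1,…,ε_K > 0 with ε_k < v_k/K for all k and v_k + ε_k < v_{k+1} for k < K. Define π_k(p) = p for p ∈ [0, v_k], π_k(p) = (v_k/ε_k)·(v_k + ε_k − p) for p ∈ (v_k, v_k + ε_k], and π_k(p) = 0 for p > v_k + ε_k. Then each π_k is concave on [0, v_k + ε_k] with sup_{p ≥ 0} π_k(p) = v_k, the optimal uniform-price profit satisfies sup_{p ≥ 0} Σ_k α_k·π_k(p) = 1/K, and the optimal discrimination profit satisfies Σ_k α_k·(sup_{p ≥ 0} π_k(p)) = (1/K)·Σ_{k=1}^K 1/k. Hence the profit ratio equals 1/(Σ_{k=1}^K 1/k), which tends to 0 as K → ∞; so with concave profit functions on distinct (non-common) bounded supports, uniform pricing can yield an arbitrarily small fraction of the third-degree price-discrimination profit. -/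
open Filter

/-- **Significance of common support.**
For `K ≥ 1` segments with values `v k = 1/(K - k)` (so, in one-based indexing
`k = 1, …, K`, `v_k = 1/(K - k + 1)`), weights `α k = 1/K`, widths
`ε k ∈ (0, v k / K)` with `v k + ε k < v (k+1)`, and the triangle-shaped
profit functions `π k` (equal to `p` on `[0, v k]`, decreasing linearly to `0`
on `(v k, v k + ε k]`, and `0` afterwards), each `π k` is concave on its own
bounded support `[0, v k + ε k]` with supremum `v k`, the optimal
uniform-price profit equals `1/K`, and the optimal discrimination profit
equals `(1/K) · Σ_{k=1}^K 1/k`; hence the profit ratio equals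
`1/(Σ_{k=1}^K 1/k)`, which tends to `0` as `K → ∞`. -/
theorem significance_of_common_support
    (K : ℕ) (hK : 1 ≤ K)
    (v ε : Fin K → ℝ)
    (hv : ∀ k : Fin K, v k = 1 / ((K : ℝ) - (k.val : ℝ)))
    (hε : ∀ k, 0 < ε k) (hεv : ∀ k, ε k < v k / K)
    (horder : ∀ (k : Fin K) (h : k.val + 1 < K), v k + ε k < v ⟨k.val + 1, h⟩)
    (π : Fin K → ℝ → ℝ)
    (hπ1 : ∀ k, ∀ p : ℝ, 0 ≤ p → p ≤ v k → π k p = p)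
    (hπ2 : ∀ k, ∀ p : ℝ, v k < p → p ≤ v k + ε k →
        π k p = (v k / ε k) * (v k + ε k - p))
    (hπ3 : ∀ k, ∀ p : ℝ, v k + ε k < p → π k p = 0) :
    (∀ k, ConcaveOn ℝ (Set.Icc 0 (v k + ε k)) (π k)) ∧
    (∀ k, sSup (π k '' Set.Ici 0) = v k) ∧
    sSup ((fun p => ∑ k, (1 / (K : ℝ)) * π k p) '' Set.Ici 0) = 1 / K ∧
    (∑ k, (1 / (K : ℝ)) * sSup (π k '' Set.Ici 0))
        = (1 / (K : ℝ)) * ∑ j ∈ Finset.range K, 1 / ((j : ℝ) + 1) ∧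
    sSup ((fun p => ∑ k, (1 / (K : ℝ)) * π k p) '' Set.Ici 0) /
        (∑ k, (1 / (K : ℝ)) * sSup (π k '' Set.Ici 0))
        = 1 / (∑ j ∈ Finset.range K, 1 / ((j : ℝ) + 1)) ∧
    Tendsto (fun n : ℕ => 1 / (∑ j ∈ Finset.range n, 1 / ((j : ℝ) + 1)))
      atTop (nhds 0) := by
  have hK0 : (0:ℝ) < K := by exact_mod_cast Nat.lt_of_lt_of_le Nat.zero_lt_one hK
  have hKk : ∀ k : Fin K, (k.val : ℝ) + 1 ≤ K := by
    intro k
    exact_mod_cast Nat.succ_le_of_lt k.isLt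
  have hv0 : ∀ k : Fin K, 0 < v k := by
    intro k
    rw [hv k]
    apply one_div_pos.mpr
    linarith [hKk k]
  have hvm : ∀ k : Fin K, v k * ((K:ℝ) - k.val) = 1 := by
    intro k
    rw [hv k]
    have h : (K:ℝ) - k.val ≠ 0 := by linarith [hKk k]
    field_simp
  -- monotonicity / separation of supports
  have hmono : ∀ j k : Fin K, j.val < k.val → v j + ε j < v k := by
    intro j k hjk
    have hA : (0:ℝ) < (K:ℝ) - j.val := by linarith [hKk j]
    have hB : (0:ℝ) < (K:ℝ) - k.val := by linarith [hKk k]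
    have hB1 : (1:ℝ) ≤ (K:ℝ) - k.val := by linarith [hKk k]
    have hAB : (K:ℝ) - k.val + 1 ≤ (K:ℝ) - j.val := by
      have : (j.val : ℝ) + 1 ≤ k.val := by exact_mod_cast Nat.succ_le_of_lt hjk
      linarith
    have hBK : (K:ℝ) - k.val ≤ K := by
      have : (0:ℝ) ≤ k.val := Nat.cast_nonneg _
      linarith
    have key : v j * ((K:ℝ)+1) ≤ v k * K := by
      rw [hv j, hv k, div_mul_eq_mul_div, div_mul_eq_mul_div,
        div_le_div_iff₀ hA hB]
      nlinarith [mul_nonneg (le_of_lt hK0) (by linarith : (0:ℝ) ≤ (K:ℝ) - k.val + 1 - ((K:ℝ) - k.val + 1) + ((K:ℝ) - j.val) - ((K:ℝ) - j.val))]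
    have h1 : ε j < v j / K := hεv j
    have h2 : v j + v j / K = v j * ((K:ℝ)+1) / K := by field_simp
    have h3 : v j * ((K:ℝ)+1) / K ≤ v k := by
      rw [div_le_iff₀ hK0]
      exact key
    linarith
  -- pointwise upper bound on each π
  have hbound1 : ∀ (k : Fin K) (p : ℝ), 0 ≤ p → π k p ≤ v k := by
    intro k p hp
    rcases le_or_gt p (v k) with h | h
    · rw [hπ1 k p hp h]; exact h
    · rcases le_or_gt p (v k + ε k) with h2 | h2
      · rw [hπ2 k p h h2]
        have h3 : v k + ε k - p ≤ ε k := by linarith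
        have h4 : (0:ℝ) ≤ v k / ε k := div_nonneg (hv0 k).le (hε k).le
        calc (v k / ε k) * (v k + ε k - p) ≤ (v k / ε k) * ε k :=
              mul_le_mul_of_nonneg_left h3 h4
          _ = v k := div_mul_cancel₀ _ (hε k).ne'
      · rw [hπ3 k p h2]; exact (hv0 k).le
  -- the key pointwise bound on the aggregate profit
  have hsum : ∀ p : ℝ, 0 ≤ p → ∑ k, π k p ≤ 1 := by
    intro p hp
    classical
    set S : Finset (Fin K) := Finset.univ.filter (fun k => p ≤ v k + ε k) with hSdef
    by_cases hS : S.Nonempty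
    · set k₀ : Fin K := S.min' hS with hk₀def
      have hk₀S : k₀ ∈ S := S.min'_mem hS
      have hk₀ : p ≤ v k₀ + ε k₀ := (Finset.mem_filter.1 hk₀S).2
      have hlt : ∀ k : Fin K, k < k₀ → π k p = 0 := by
        intro k hk
        have hkS : k ∉ S := fun h => absurd (S.min'_le k h) (not_le.2 hk)
        have : ¬ p ≤ v k + ε k := by
          intro h
          exact hkS (Finset.mem_filter.2 ⟨Finset.mem_univ k, h⟩)
        exact hπ3 k p (not_le.1 this)
      have hgt : ∀ k : Fin K, k₀ < k → π k p = p := by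
        intro k hk
        have h1 : v k₀ + ε k₀ < v k := hmono k₀ k hk
        exact hπ1 k p hp (le_of_lt (lt_of_le_of_lt hk₀ h1))
      have hcard : (Finset.univ.filter (fun k : Fin K => k₀ < k)).card
          = K - 1 - k₀.val := by
        rw [show Finset.univ.filter (fun k : Fin K => k₀ < k) = Finset.Ioi k₀ by
          ext x; simp [Finset.mem_Ioi]]
        exact Fin.card_Ioi k₀
      have hcast : ((K - 1 - k₀.val : ℕ) : ℝ) = (K:ℝ) - 1 - k₀.val := by
        have h1 : k₀.val ≤ K - 1 := by omega
        rw [Nat.cast_sub h1, Nat.cast_sub hK]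
        push_cast
        ring
      have hsum_eq : ∑ k, π k p
          = ((K:ℝ) - 1 - k₀.val) * p + π k₀ p := by
        calc ∑ k, π k p
            = ∑ k, (if k₀ < k then p else if k = k₀ then π k₀ p else 0) := by
              refine Finset.sum_congr rfl (fun k _ => ?_)
              rcases lt_trichotomy k₀ k with h | h | h
              · rw [hgt k h, if_pos h]
              · subst h
                rw [if_neg (lt_irrefl _), if_pos rfl]
              · rw [hlt k h, if_neg (not_lt.2 h.le), if_neg (ne_of_lt h)]
          _ = (∑ _k ∈ Finset.univ.filter (fun k : Fin K => k₀ < k), p)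
              + ∑ k ∈ Finset.univ.filter (fun k : Fin K => ¬ k₀ < k),
                  (if k = k₀ then π k₀ p else 0) := Finset.sum_ite _ _
          _ = ((K:ℝ) - 1 - k₀.val) * p + π k₀ p := by
              rw [Finset.sum_const, hcard, Finset.sum_ite_eq',
                if_pos (by simp), nsmul_eq_mul, hcast]
      set C : ℝ := (K:ℝ) - 1 - k₀.val with hC
      have hC0 : 0 ≤ C := by
        have := hKk k₀; simp only [hC]; linarith
      have hCv : (C + 1) * v k₀ = 1 := by
        have := hvm k₀
        have h1 : C + 1 = (K:ℝ) - k₀.val := by simp only [hC]; ring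
        rw [h1, mul_comm]; exact this
      rw [hsum_eq]
      rcases le_or_gt p (v k₀) with hpv | hpv
      · rw [hπ1 k₀ p hp hpv]
        have : (C + 1) * p ≤ (C + 1) * v k₀ :=
          mul_le_mul_of_nonneg_left hpv (by linarith)
        nlinarith
      · rw [hπ2 k₀ p hpv hk₀]
        have he : 0 < ε k₀ := hε k₀
        have hCe : C * ε k₀ ≤ v k₀ := by
          have h1 : ε k₀ < v k₀ / K := hεv k₀
          have h2 : C ≤ (K:ℝ) - 1 := by
            have : (0:ℝ) ≤ k₀.val := Nat.cast_nonneg _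
            simp only [hC]; linarith
          have h3 : C * ε k₀ ≤ C * (v k₀ / K) :=
            mul_le_mul_of_nonneg_left h1.le hC0
          have h4 : C * (v k₀ / K) ≤ v k₀ := by
            rw [mul_div_assoc']
            rw [div_le_iff₀ hK0]
            nlinarith [hv0 k₀]
          exact h3.trans h4
        have key : v k₀ * (v k₀ + ε k₀ - p) ≤ ε k₀ * (1 - C * p) := by
          have hfac : (0:ℝ) ≤ (p - v k₀) * (v k₀ - C * ε k₀) :=
            mul_nonneg (by linarith) (by linarith)
          nlinarith [hCv]
        have heq : (v k₀ / ε k₀) * (v k₀ + ε k₀ - p)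
            = v k₀ * (v k₀ + ε k₀ - p) / ε k₀ := by ring
        rw [heq]
        have h6 : v k₀ * (v k₀ + ε k₀ - p) / ε k₀ ≤ 1 - C * p := by
          rw [div_le_iff₀ he]
          nlinarith [key]
        linarith
    · have hall : ∀ k : Fin K, v k + ε k < p := by
        intro k
        by_contra h
        exact hS ⟨k, Finset.mem_filter.2 ⟨Finset.mem_univ k, not_lt.1 h⟩⟩
      have : ∀ k : Fin K, π k p = 0 := fun k => hπ3 k p (hall k)
      rw [Finset.sum_congr rfl (fun k _ => this k), Finset.sum_const,
        smul_zero]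
      norm_num
  -- segment-wise suprema
  have hsup : ∀ k, sSup (π k '' Set.Ici 0) = v k := by
    intro k
    have hne : (π k '' Set.Ici 0).Nonempty := ⟨π k 0, 0, Set.self_mem_Ici, rfl⟩
    have hbdd : BddAbove (π k '' Set.Ici 0) := by
      refine ⟨v k, ?_⟩
      rintro x ⟨p, hp, rfl⟩
      exact hbound1 k p hp
    refine le_antisymm (csSup_le hne ?_) (le_csSup hbdd ?_)
    · rintro x ⟨p, hp, rfl⟩
      exact hbound1 k p hp
    · exact ⟨v k, Set.mem_Ici.mpr (hv0 k).le, hπ1 k (v k) (hv0 k).le le_rfl⟩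
  -- the last segment
  have hKpos : 0 < K := hK
  set last : Fin K := ⟨K - 1, by omega⟩ with hlast
  have hlastval : last.val = K - 1 := rfl
  have hvlast : v last = 1 := by
    rw [hv last, hlastval]
    have h1 : ((K - 1 : ℕ) : ℝ) = (K:ℝ) - 1 := by
      rw [Nat.cast_sub hK]; push_cast; ring
    rw [h1]
    norm_num
  -- uniform profit supremum
  have huni : sSup ((fun p => ∑ k, (1 / (K : ℝ)) * π k p) '' Set.Ici 0)
      = 1 / K := by
    have hub : ∀ p : ℝ, 0 ≤ p → (∑ k, (1 / (K : ℝ)) * π k p) ≤ 1 / K := by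
      intro p hp
      rw [← Finset.mul_sum]
      calc (1 / (K:ℝ)) * ∑ k, π k p ≤ (1 / (K:ℝ)) * 1 :=
            mul_le_mul_of_nonneg_left (hsum p hp) (by positivity)
        _ = 1 / K := mul_one _
    have hval : (∑ k, (1 / (K : ℝ)) * π k 1) = 1 / K := by
      have h1 : ∀ k : Fin K, (1 / (K : ℝ)) * π k 1
          = (if k = last then 1 / (K:ℝ) else 0) := by
        intro k
        rcases eq_or_ne k last with h | h
        · rw [h, hπ1 last 1 zero_le_one (le_of_eq hvlast.symm), mul_one,
            if_pos rfl]
        · have hklt : k.val < last.val := by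
            have h2 := k.isLt
            have h3 : k.val ≠ K - 1 := fun hc =>
              h (Fin.ext (hc.trans hlastval.symm))
            rw [hlastval]
            omega
          have h2 : v k + ε k < v last := hmono k last hklt
          rw [hπ3 k 1 (by rw [hvlast] at h2; linarith), mul_zero, if_neg h]
      rw [Finset.sum_congr rfl (fun k _ => h1 k),
        Finset.sum_ite_eq' Finset.univ last (fun _ => 1 / (K:ℝ)),
        if_pos (Finset.mem_univ _)]
    have hne : ((fun p => ∑ k, (1 / (K : ℝ)) * π k p) '' Set.Ici 0).Nonempty :=
      ⟨_, 0, Set.self_mem_Ici, rfl⟩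
    have hbdd : BddAbove ((fun p => ∑ k, (1 / (K : ℝ)) * π k p) '' Set.Ici 0) := by
      refine ⟨1 / K, ?_⟩
      rintro x ⟨p, hp, rfl⟩
      exact hub p hp
    refine le_antisymm (csSup_le hne ?_) (le_csSup hbdd ?_)
    · rintro x ⟨p, hp, rfl⟩
      exact hub p hp
    · exact ⟨1, Set.mem_Ici.mpr zero_le_one, hval⟩
  -- discrimination profit
  have hdisc : (∑ k, (1 / (K : ℝ)) * sSup (π k '' Set.Ici 0))
      = (1 / (K : ℝ)) * ∑ j ∈ Finset.range K, 1 / ((j : ℝ) + 1) := by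
    rw [Finset.sum_congr rfl (fun k _ => by rw [hsup k, hv k]),
      ← Finset.mul_sum]
    congr 1
    rw [Fin.sum_univ_eq_sum_range (fun i => 1 / ((K:ℝ) - i)) K]
    rw [← Finset.sum_range_reflect (fun j => 1 / ((j:ℝ) + 1)) K]
    refine Finset.sum_congr rfl (fun j hj => ?_)
    have hjK : j < K := Finset.mem_range.1 hj
    have h1 : ((K - 1 - j : ℕ) : ℝ) = (K:ℝ) - 1 - j := by
      rw [Nat.cast_sub (by omega), Nat.cast_sub hK]
      push_cast; ring
    rw [h1]
    ring_nf
  -- positivity of the harmonic sum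
  have hH : 0 < ∑ j ∈ Finset.range K, 1 / ((j : ℝ) + 1) :=
    Finset.sum_pos (fun j _ => by positivity)
      (Finset.nonempty_range_iff.mpr (by omega))
  -- concavity
  have hconc : ∀ k, ConcaveOn ℝ (Set.Icc 0 (v k + ε k)) (π k) := by
    intro k
    have he : 0 < ε k := hε k
    have hvk : 0 < v k := hv0 k
    have hmin : ConcaveOn ℝ (Set.Icc 0 (v k + ε k))
        (fun p => min p ((v k / ε k) * (v k + ε k - p))) := by
      refine ⟨convex_Icc _ _, fun x _ y _ c d hc hd hcd => ?_⟩
      simp only [smul_eq_mul]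
      apply le_min
      · have h1 : c * min x ((v k / ε k) * (v k + ε k - x)) ≤ c * x :=
          mul_le_mul_of_nonneg_left (min_le_left _ _) hc
        have h2 : d * min y ((v k / ε k) * (v k + ε k - y)) ≤ d * y :=
          mul_le_mul_of_nonneg_left (min_le_left _ _) hd
        linarith
      · have h3 : (v k / ε k) * (v k + ε k - (c * x + d * y))
            = c * ((v k / ε k) * (v k + ε k - x))
              + d * ((v k / ε k) * (v k + ε k - y)) := by
          linear_combination (v k / ε k) * (v k + ε k) * hcd.symm
        rw [h3]
        have h1 : c * min x ((v k / ε k) * (v k + ε k - x))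
            ≤ c * ((v k / ε k) * (v k + ε k - x)) :=
          mul_le_mul_of_nonneg_left (min_le_right _ _) hc
        have h2 : d * min y ((v k / ε k) * (v k + ε k - y))
            ≤ d * ((v k / ε k) * (v k + ε k - y)) :=
          mul_le_mul_of_nonneg_left (min_le_right _ _) hd
        linarith
    apply hmin.congr
    intro p hp
    obtain ⟨hp0, hpv⟩ := hp
    rcases le_or_gt p (v k) with h | h
    · rw [hπ1 k p hp0 h]
      apply min_eq_left
      rw [div_mul_eq_mul_div, le_div_iff₀ he]
      nlinarith
    · rw [hπ2 k p h hpv]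
      apply min_eq_right
      rw [div_mul_eq_mul_div, div_le_iff₀ he]
      nlinarith
  refine ⟨hconc, hsup, huni, hdisc, ?_, ?_⟩
  · rw [huni, hdisc]
    have hprod : (0:ℝ) < (1 / (K:ℝ)) * ∑ j ∈ Finset.range K, 1 / ((j:ℝ) + 1) :=
      mul_pos (by positivity) hH
    rw [div_eq_div_iff hprod.ne' hH.ne']
    ring
  · exact (tendsto_inv_atTop_zero.comp
      Real.tendsto_sum_range_one_div_nat_succ_atTop).congr
      (fun n => (one_div _).symm)
end

section
/- Fix K ≥ 1 and set v_k = 1/(K − k + 1), q_k = 1/2 and α_k = 1/K for k = 1,…,K. Define the triangular-instance CDFs F_k(p) = 1 for p ≥ v_k and F_k(p) = p·(1 − q_k)/(p·(1 − q_k) + v_k·q_k) for 0 ≤ p < v_k, so that the profit functions are π_k(p) = p·v_k/(p + v_k) for p < v_k and π_k(p) = 0 for p ≥ v_k. Then each F_k is a regular distribution, sup_{p ≥ 0} π_k(p) = v_k/2, the optimal discrimination profit is Π* = Σ_k α_k·(sup_{p≥0} π_k(p)) = (1/(2K))·Σ_{k=1}^K 1/k, and the optimal uniform-price profit is Π^U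 = sup_{p ≥ 0} Σ_k α_k·π_k(p) = (1/K)·Σ_{k=1}^K 1/(K + k). -/
/-!
A triangular instance `(v, q)` has the constant virtual value `-v q / (1 - q)`, and below `v` its
profit `p v q / (p (1 - q) + v q)` increases to `v q` as `p ↑ v` before dropping to `0` at `v`, so
its supremum `v q` is approached but not attained.

For the uniform price, segment `m` has value `1 / m`. At a price `p ≤ 1 / a` a segment of value
`1 / b` earns at most `1 / (a + b)`. Inducting on the number `n` of segments: if `p ≤ 1 / n` this
bounds the total by `Σ_{m ≤ n} 1 / (n + m)`; otherwise segment `n` earns nothing and one concludes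
because `Σ_{m ≤ n} 1 / (n + m) = H_{2n} - H_n` increases with `n`. The bound is approached as
`p ↑ 1 / n`.
-/

open Filter Topology Finset

noncomputable section

theorem csSup_image_eq_of_tendsto {α β : Type*} [ConditionallyCompleteLinearOrder α]
    [TopologicalSpace α] [OrderTopology α] {f : β → α} {s : Set β} {l : Filter β} [l.NeBot]
    {L : α} (hs : ∀ᶠ x in l, x ∈ s) (hle : ∀ x ∈ s, f x ≤ L) (hf : Tendsto f l (𝓝 L)) :
    sSup (f '' s) = L := by
  refine (isLUB_of_mem_closure ?_ ?_).csSup_eq (Set.Nonempty.image f hs.exists)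
  · rintro _ ⟨x, hx, rfl⟩
    exact hle x hx
  · exact mem_closure_of_tendsto hf (hs.mono fun x hx => Set.mem_image_of_mem f hx)

theorem sum_fin_sub_eq_sum_range (K : ℕ) (u : ℝ → ℝ) :
    ∑ k : Fin K, u ((K : ℝ) - (k.val : ℝ)) = ∑ j ∈ range K, u ((j : ℝ) + 1) := by
  rw [Fin.sum_univ_eq_sum_range (fun k => u ((K : ℝ) - k)) K, ← sum_range_reflect]
  refine sum_congr rfl fun j hj => ?_
  rw [Nat.sub_sub, Nat.cast_sub (by rw [mem_range] at hj; omega)]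
  push_cast
  ring_nf

def profit (F : ℝ → ℝ) (p : ℝ) : ℝ := p * (1 - F p)

def virtualValue (F : ℝ → ℝ) (p : ℝ) : ℝ := p - (1 - F p) / deriv F p

structure IsTriangularCDF (v q : ℝ) (F : ℝ → ℝ) : Prop where
  eq_one : ∀ p, v ≤ p → F p = 1
  eq_of_lt : ∀ p, 0 ≤ p → p < v → F p = p * (1 - q) / (p * (1 - q) + v * q)

def triangularProfit (v q p : ℝ) : ℝ :=
  if p < v then p * v * q / (p * (1 - q) + v * q) else 0

section Triangular

variable {v q p : ℝ}

theorem triangularProfit_of_lt (h : p < v) :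
    triangularProfit v q p = p * v * q / (p * (1 - q) + v * q) := if_pos h

theorem triangularProfit_of_le (h : v ≤ p) : triangularProfit v q p = 0 := if_neg h.not_gt

theorem IsTriangularCDF.profit_of_le {F : ℝ → ℝ} (hF : IsTriangularCDF v q F) (h : v ≤ p) :
    profit F p = 0 := by
  rw [profit, hF.eq_one p h, sub_self, mul_zero]

variable (hv : 0 < v) (hq0 : 0 < q) (hq1 : q < 1)
include hv hq0 hq1

theorem triangular_denominator_pos (hp : 0 ≤ p) : 0 < p * (1 - q) + v * q :=
  add_pos_of_nonneg_of_pos (mul_nonneg hp (sub_pos.2 hq1).le) (mul_pos hv hq0)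

theorem triangularProfit_le_of_le {w : ℝ} (hp : 0 ≤ p) (hpw : p ≤ w) :
    triangularProfit v q p ≤ w * v * q / (w * (1 - q) + v * q) := by
  have hw := triangular_denominator_pos hv hq0 hq1 (hp.trans hpw)
  rcases lt_or_ge p v with hpv | hpv
  · rw [triangularProfit_of_lt hpv,
      div_le_div_iff₀ (triangular_denominator_pos hv hq0 hq1 hp) hw]
    have : 0 ≤ (w - p) * (v * q) * (v * q) := by have := sub_nonneg.2 hpw; positivity
    nlinarith
  · rw [triangularProfit_of_le hpv]
    have := hp.trans hpw
    positivity

theorem triangularProfit_le (hp : 0 ≤ p) : triangularProfit v q p ≤ v * q := by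
  rcases lt_or_ge p v with hpv | hpv
  · have h := triangularProfit_le_of_le hv hq0 hq1 hp hpv.le
    rwa [show v * (1 - q) + v * q = v by ring, mul_assoc, mul_div_cancel_left₀ _ hv.ne'] at h
  · rw [triangularProfit_of_le hpv]
    positivity

theorem tendsto_triangularProfit_nhdsLT {w : ℝ} (hw : 0 ≤ w) (hwv : w ≤ v) :
    Tendsto (triangularProfit v q) (𝓝[<] w) (𝓝 (w * v * q / (w * (1 - q) + v * q))) := by
  have hcont : ContinuousAt (fun p => p * v * q / (p * (1 - q) + v * q)) w :=
    ContinuousAt.div (by fun_prop) (by fun_prop) (triangular_denominator_pos hv hq0 hq1 hw).ne'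
  refine (hcont.mono_left nhdsWithin_le_nhds).congr' ?_
  filter_upwards [self_mem_nhdsWithin] with p (hp : p < w)
  exact (triangularProfit_of_lt (hp.trans_le hwv)).symm

theorem sSup_triangularProfit_image : sSup (triangularProfit v q '' Set.Ici 0) = v * q := by
  refine csSup_image_eq_of_tendsto (l := 𝓝[<] v) ?_
    (fun p hp => triangularProfit_le hv hq0 hq1 hp) ?_
  · filter_upwards [Ioo_mem_nhdsLT hv] with p hp using hp.1.le
  · convert tendsto_triangularProfit_nhdsLT hv hq0 hq1 hv.le le_rfl using 2
    rw [show v * (1 - q) + v * q = v by ring, mul_assoc, mul_div_cancel_left₀ _ hv.ne']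

namespace IsTriangularCDF

variable {F : ℝ → ℝ} (hF : IsTriangularCDF v q F)
include hF

theorem profit_eq (hp : 0 ≤ p) : profit F p = triangularProfit v q p := by
  rcases lt_or_ge p v with hpv | hpv
  · rw [profit, hF.eq_of_lt p hp hpv, triangularProfit_of_lt hpv,
      one_sub_div (triangular_denominator_pos hv hq0 hq1 hp).ne', add_sub_cancel_left,
      mul_div_assoc', mul_assoc]
  · rw [hF.profit_of_le hpv, triangularProfit_of_le hpv]

theorem sSup_profit_image : sSup (profit F '' Set.Ici 0) = v * q := by
  have h : Set.EqOn (profit F) (triangularProfit v q) (Set.Ici 0) :=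
    fun _ hp => hF.profit_eq hv hq0 hq1 hp
  rw [h.image_eq]
  exact sSup_triangularProfit_image hv hq0 hq1

theorem monotoneOn : MonotoneOn F (Set.Ici 0) := by
  intro x (hx : 0 ≤ x) y (hy : 0 ≤ y) hxy
  have hDx := triangular_denominator_pos hv hq0 hq1 hx
  rcases lt_or_ge y v with hyv | hyv
  · rw [hF.eq_of_lt x hx (hxy.trans_lt hyv), hF.eq_of_lt y hy hyv,
      div_le_div_iff₀ hDx (triangular_denominator_pos hv hq0 hq1 hy)]
    have : 0 ≤ (y - x) * (1 - q) * (v * q) := by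
      have := sub_nonneg.2 hxy; have := sub_pos.2 hq1; positivity
    nlinarith
  · rw [hF.eq_one y hyv]
    rcases lt_or_ge x v with hxv | hxv
    · rw [hF.eq_of_lt x hx hxv, div_le_one hDx]
      nlinarith
    · rw [hF.eq_one x hxv]

theorem virtualValue_eq (hp : p ∈ Set.Ioo 0 v) : virtualValue F p = -(v * q / (1 - q)) := by
  have hD : p * (1 - q) + v * q ≠ 0 := (triangular_denominator_pos hv hq0 hq1 hp.1.le).ne'
  have hFeq : F =ᶠ[𝓝 p] fun x => x * (1 - q) / (x * (1 - q) + v * q) :=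
    eventually_of_mem (Ioo_mem_nhds hp.1 hp.2) fun x hx => hF.eq_of_lt x hx.1.le hx.2
  have hderiv := (((hasDerivAt_id' p).mul_const (1 - q)).div
    (((hasDerivAt_id' p).mul_const (1 - q)).add_const (v * q)) hD).congr_of_eventuallyEq hFeq
  rw [virtualValue, hderiv.deriv, hF.eq_of_lt p hp.1.le hp.2]
  set D := p * (1 - q) + v * q with hD_def
  have hsurvival : 1 - p * (1 - q) / D = v * q / D := by
    rw [one_sub_div hD, hD_def, add_sub_cancel_left]
  have hdensity : 1 * (1 - q) * D - p * (1 - q) * (1 * (1 - q)) = (1 - q) * (v * q) := by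
    rw [hD_def]; ring
  rw [hsurvival, hdensity]
  field_simp [hv.ne', hq0.ne', (sub_pos.2 hq1).ne']
  rw [hD_def]
  ring

theorem monotoneOn_virtualValue : MonotoneOn (virtualValue F) (Set.Ioo 0 v) :=
  fun _ ha _ hb _ => (hF.virtualValue_eq hv hq0 hq1 ha).trans
    (hF.virtualValue_eq hv hq0 hq1 hb).symm |>.le

end IsTriangularCDF

end Triangular

theorem one_div_mul_one_div_mul_half_div_eq {a b : ℝ} (ha : 0 < a) (hb : 0 < b) :
    1 / a * (1 / b) * (1 / 2) / (1 / a * (1 - 1 / 2) + 1 / b * (1 / 2)) = 1 / (a + b) := by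
  field_simp
  ring

theorem triangularProfit_one_div_half_le {a b p : ℝ} (ha : 0 < a) (hb : 0 < b) (hp : 0 ≤ p)
    (hpa : p * a ≤ 1) : triangularProfit (1 / b) (1 / 2) p ≤ 1 / (a + b) :=
  (triangularProfit_le_of_le (one_div_pos.2 hb) (by norm_num) (by norm_num) hp
    ((le_div_iff₀ ha).2 hpa)).trans_eq (one_div_mul_one_div_mul_half_div_eq ha hb)

/-- `H_{2n} - H_n`. -/
def harmonicTail (n : ℕ) : ℝ := ∑ j ∈ range n, 1 / ((n : ℝ) + ((j : ℝ) + 1))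

theorem harmonicTail_le_succ (n : ℕ) : harmonicTail n ≤ harmonicTail (n + 1) := by
  set f : ℕ → ℝ := fun j => 1 / ((n : ℝ) + ((j : ℝ) + 1))
  have hshift : harmonicTail (n + 1) + f 0 = harmonicTail n + f n + f (n + 1) := by
    have : harmonicTail (n + 1) = ∑ j ∈ range (n + 1), f (j + 1) :=
      sum_congr rfl fun j _ => by simp only [f]; push_cast; ring_nf
    rw [this, ← sum_range_succ', sum_range_succ, sum_range_succ]
    rfl
  have hf : f 0 ≤ f n + f (n + 1) := by
    simp only [f]
    push_cast
    rw [div_add_div _ _ (by positivity) (by positivity), div_le_div_iff₀ (by positivity)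
      (by positivity)]
    nlinarith
  linarith

def totalProfit (n : ℕ) (p : ℝ) : ℝ :=
  ∑ j ∈ range n, triangularProfit (1 / ((j : ℝ) + 1)) (1 / 2) p

theorem totalProfit_le_harmonicTail (n : ℕ) {p : ℝ} (hp : 0 ≤ p) :
    totalProfit n p ≤ harmonicTail n := by
  induction n with
  | zero => simp [totalProfit, harmonicTail]
  | succ n ih =>
    rcases le_or_gt (p * ((n : ℝ) + 1)) 1 with hpn | hpn
    · unfold totalProfit harmonicTail
      push_cast
      exact sum_le_sum fun j _ =>
        triangularProfit_one_div_half_le (by positivity) (by positivity) hp hpn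
    · have hlast : triangularProfit (1 / ((n : ℝ) + 1)) (1 / 2) p = 0 :=
        triangularProfit_of_le ((div_le_iff₀ (by positivity)).2 hpn.le)
      calc totalProfit (n + 1) p = totalProfit n p := by
            rw [totalProfit, sum_range_succ, hlast, add_zero, totalProfit]
        _ ≤ harmonicTail n := ih
        _ ≤ harmonicTail (n + 1) := harmonicTail_le_succ n

theorem tendsto_totalProfit_nhdsLT {n : ℕ} (hn : 0 < n) :
    Tendsto (totalProfit n) (𝓝[<] (1 / (n : ℝ))) (𝓝 (harmonicTail n)) := by
  have hn' : (0 : ℝ) < n := by exact_mod_cast hn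
  unfold totalProfit harmonicTail
  refine tendsto_finsetSum _ fun j hj => ?_
  have hjn : ((j : ℝ) + 1) ≤ n := by exact_mod_cast mem_range.1 hj
  convert tendsto_triangularProfit_nhdsLT (q := 1 / 2) (by positivity) (by norm_num) (by norm_num)
    (one_div_pos.2 hn').le (one_div_le_one_div_of_le (by positivity) hjn) using 2
  exact (one_div_mul_one_div_mul_half_div_eq hn' (by positivity)).symm

theorem sSup_one_div_mul_totalProfit_image {n : ℕ} (hn : 0 < n) :
    sSup ((fun p => 1 / (n : ℝ) * totalProfit n p) '' Set.Ici 0) =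
      1 / (n : ℝ) * harmonicTail n := by
  have hn' : (0 : ℝ) < 1 / n := one_div_pos.2 (by exact_mod_cast hn)
  refine csSup_image_eq_of_tendsto (l := 𝓝[<] (1 / (n : ℝ))) ?_
    (fun p hp => mul_le_mul_of_nonneg_left (totalProfit_le_harmonicTail n hp) hn'.le)
    ((tendsto_totalProfit_nhdsLT hn).const_mul _)
  filter_upwards [Ioo_mem_nhdsLT hn'] with p hp using hp.1.le

theorem one_div_natCast_sub_fin_pos {K : ℕ} (k : Fin K) : 0 < 1 / ((K : ℝ) - k.val) :=
  one_div_pos.2 (sub_pos.2 (by exact_mod_cast k.isLt))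

theorem sum_profit_eq_totalProfit {K : ℕ} {v : Fin K → ℝ}
    (hv : ∀ k : Fin K, v k = 1 / ((K : ℝ) - k.val)) {F : Fin K → ℝ → ℝ}
    (hF : ∀ k, IsTriangularCDF (v k) (1 / 2) (F k)) {p : ℝ} (hp : 0 ≤ p) :
    ∑ k, profit (F k) p = totalProfit K p :=
  calc ∑ k, profit (F k) p = ∑ k : Fin K, triangularProfit (1 / ((K : ℝ) - k.val)) (1 / 2) p :=
        sum_congr rfl fun k _ => by
          rw [← hv k]
          exact (hF k).profit_eq (by rw [hv k]; exact one_div_natCast_sub_fin_pos k) (by norm_num)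
            (by norm_num) hp
    _ = totalProfit K p := sum_fin_sub_eq_sum_range K fun x => triangularProfit (1 / x) (1 / 2) p

end

/-- **Triangular instances (regular distributions) with poor uniform pricing.**
For `K ≥ 1` segments with values `v k = 1/(K - k)` (one-based: `1/(K - k + 1)`),
quantiles `q_k = 1/2`, weights `α k = 1/K` and triangular-instance CDFs
`F k p = 1` for `p ≥ v k` and `F k p = p(1 - q)/(p(1 - q) + v k · q)` (with
`q = 1/2`) for `0 ≤ p < v k`: each `F k` is nondecreasing with a nondecreasing
virtual value (regular), the profit functions are `p · v k/(p + v k)` below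
`v k` and `0` above, the per-segment optimal profit is `v k / 2`, the optimal
discrimination profit is `(1/(2K)) Σ_{k=1}^K 1/k`, and the optimal
uniform-price profit is `(1/K) Σ_{k=1}^K 1/(K + k)`. -/
theorem triangular_instances_failure_of_regular
    (K : ℕ) (hK : 1 ≤ K)
    (v : Fin K → ℝ) (hv : ∀ k : Fin K, v k = 1 / ((K : ℝ) - (k.val : ℝ)))
    (F : Fin K → ℝ → ℝ)
    (hFhigh : ∀ k, ∀ p : ℝ, v k ≤ p → F k p = 1)
    (hFlow : ∀ k, ∀ p : ℝ, 0 ≤ p → p < v k →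
        F k p = (p * (1 - 1/2)) / (p * (1 - 1/2) + v k * (1/2))) :
    (∀ k, MonotoneOn (F k) (Set.Ici 0)) ∧
    (∀ k, MonotoneOn (fun p => p - (1 - F k p) / deriv (F k) p)
        (Set.Ioo 0 (v k))) ∧
    (∀ k, ∀ p : ℝ, 0 ≤ p → p < v k → p * (1 - F k p) = p * v k / (p + v k)) ∧
    (∀ k, ∀ p : ℝ, v k ≤ p → p * (1 - F k p) = 0) ∧
    (∀ k, sSup ((fun p => p * (1 - F k p)) '' Set.Ici 0) = v k / 2) ∧
    (∑ k, (1 / (K : ℝ)) * sSup ((fun p => p * (1 - F k p)) '' Set.Ici 0)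
        = (1 / (2 * (K : ℝ))) * ∑ j ∈ Finset.range K, 1 / ((j : ℝ) + 1)) ∧
    sSup ((fun p => ∑ k, (1 / (K : ℝ)) * (p * (1 - F k p))) '' Set.Ici 0)
        = (1 / (K : ℝ)) * ∑ j ∈ Finset.range K, 1 / ((K : ℝ) + ((j : ℝ) + 1)) := by
  have hvpos : ∀ k, 0 < v k := fun k => (hv k).symm ▸ one_div_natCast_sub_fin_pos k
  have hq0 : (0 : ℝ) < 1 / 2 := by norm_num
  have hq1 : (1 / 2 : ℝ) < 1 := by norm_num
  have hF : ∀ k, IsTriangularCDF (v k) (1 / 2) (F k) := fun k => ⟨hFhigh k, hFlow k⟩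
  have hsup : ∀ k, sSup ((fun p => p * (1 - F k p)) '' Set.Ici 0) = v k / 2 := fun k =>
    ((hF k).sSup_profit_image (hvpos k) hq0 hq1).trans (mul_one_div _ _)
  refine ⟨fun k => (hF k).monotoneOn (hvpos k) hq0 hq1,
    fun k => (hF k).monotoneOn_virtualValue (hvpos k) hq0 hq1, fun k p hp hpv => ?_,
    fun k _ => (hF k).profit_of_le, hsup, ?_, ?_⟩
  · rw [← profit, (hF k).profit_eq (hvpos k) hq0 hq1 hp, triangularProfit_of_lt hpv]
    field_simp
    ring
  · calc ∑ k, 1 / (K : ℝ) * sSup ((fun p => p * (1 - F k p)) '' Set.Ici 0)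
        = ∑ k : Fin K, 1 / (2 * (K : ℝ)) * (1 / ((K : ℝ) - k.val)) :=
          sum_congr rfl fun k _ => by rw [hsup k, hv k]; ring
      _ = _ := by rw [sum_fin_sub_eq_sum_range K fun x => 1 / (2 * (K : ℝ)) * (1 / x), mul_sum]
  · have huniform : Set.EqOn (fun p => ∑ k, (1 / (K : ℝ)) * (p * (1 - F k p)))
        (fun p => 1 / (K : ℝ) * totalProfit K p) (Set.Ici 0) := fun p hp => by
      change ∑ k, 1 / (K : ℝ) * profit (F k) p = _
      rw [← mul_sum, sum_profit_eq_totalProfit hv hF hp]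
    rw [huniform.image_eq]
    exact sSup_one_div_mul_totalProfit_image hK
end

section
/- For K ≥ 1 define r_K = [ (1/K)·Σ_{k=1}^K 1/(K + k) ] / [ (1/(2K))·Σ_{k=1}^K 1/k ] = 2·(Σ_{k=1}^K 1/(K + k)) / (Σ_{k=1}^K 1/k). Then r_K → 0 as K → ∞. Consequently, for the triangular instance with v_k = 1/(K − k + 1), q_k = 1/2 and α_k = 1/K, the profit ratio of the optimal uniform price to optimal third-degree price discrimination, which equals r_K, becomes arbitrarily small as the number of segments K grows; thus regularity of the distributions does not guarantee any constant-factor performance of uniform pricing. -/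
/-!
Each of the `K` terms of `∑_{k=1}^K 1/(K+k)` is at most `1/K`, so the numerator stays bounded,
while the denominator is the harmonic sum, which diverges.
-/

open Filter Finset

theorem tendsto_div_atTop_of_isBoundedUnder {ι : Type*} {l : Filter ι} {f g : ι → ℝ}
    (hf : IsBoundedUnder (· ≤ ·) l (fun i => ‖f i‖)) (hg : Tendsto g l atTop) :
    Tendsto (fun i => f i / g i) l (nhds 0) := by
  simpa only [div_eq_inv_mul, Pi.inv_apply] using
    hg.inv_tendsto_atTop.zero_mul_isBoundedUnder_le hf

theorem sum_range_one_div_add_succ_le_one (n : ℕ) :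
    ∑ k ∈ range n, 1 / ((n : ℝ) + ((k : ℝ) + 1)) ≤ 1 := by
  calc ∑ k ∈ range n, 1 / ((n : ℝ) + ((k : ℝ) + 1))
      ≤ ∑ _k ∈ range n, 1 / (n : ℝ) := by
        gcongr with k hk
        · exact Nat.cast_pos.mpr (k.zero_le.trans_lt (mem_range.mp hk))
        · linarith [(k.cast_nonneg : (0 : ℝ) ≤ k)]
    _ ≤ 1 := by
        rw [sum_const, card_range, nsmul_eq_mul, mul_one_div]
        exact div_self_le_one _

theorem two_mul_div_eq_one_div_mul_div_one_div_two_mul {c : ℝ} (hc : c ≠ 0) (a b : ℝ) :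
    2 * a / b = (1 / c * a) / (1 / (2 * c) * b) := by
  field_simp

/-- **The profit ratio of the triangular instance vanishes.**
The ratio `r_K = [(1/K) Σ_{k=1}^K 1/(K+k)] / [(1/(2K)) Σ_{k=1}^K 1/k]
= 2 (Σ_{k=1}^K 1/(K+k)) / (Σ_{k=1}^K 1/k)` tends to `0` as `K → ∞`; hence for
the triangular instance with `v_k = 1/(K-k+1)`, `q_k = 1/2`, `α_k = 1/K` the
profit ratio of the optimal uniform price to optimal third-degree price
discrimination becomes arbitrarily small as the number of segments grows. -/
theorem triangular_profit_ratio_tendsto_zero :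
    (∀ K : ℕ, 1 ≤ K →
      2 * (∑ k ∈ Finset.range K, 1 / ((K : ℝ) + ((k : ℝ) + 1))) /
          (∑ k ∈ Finset.range K, 1 / ((k : ℝ) + 1))
        = ((1 / (K : ℝ)) * ∑ k ∈ Finset.range K, 1 / ((K : ℝ) + ((k : ℝ) + 1))) /
          ((1 / (2 * (K : ℝ))) * ∑ k ∈ Finset.range K, 1 / ((k : ℝ) + 1))) ∧
    Tendsto (fun K : ℕ =>
        2 * (∑ k ∈ Finset.range K, 1 / ((K : ℝ) + ((k : ℝ) + 1))) /
          (∑ k ∈ Finset.range K, 1 / ((k : ℝ) + 1)))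
      atTop (nhds 0) := by
  refine ⟨fun K hK =>
    two_mul_div_eq_one_div_mul_div_one_div_two_mul (Nat.cast_ne_zero.mpr (by omega)) _ _, ?_⟩
  have numerator_bounded : IsBoundedUnder (· ≤ ·) atTop
      (fun K : ℕ => ‖2 * ∑ k ∈ range K, 1 / ((K : ℝ) + ((k : ℝ) + 1))‖) := by
    refine isBoundedUnder_of ⟨2, fun K => ?_⟩
    rw [Real.norm_of_nonneg (by positivity)]
    linarith [sum_range_one_div_add_succ_le_one K]
  exact tendsto_div_atTop_of_isBoundedUnder numerator_bounded
    Real.tendsto_sum_range_one_div_nat_succ_atTop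
end

section
/- Fix K ≥ 1 and L > 0. For k = 1,…,K let λ_k = K − k + 1 and let F_k(p) = (1 − e^{−λ_k·p})/(1 − e^{−λ_k·L}) for p ∈ [0, L] (truncated exponential CDFs), with weights α_k = 1/K. Then for every p ∈ [0, L], the aggregate uniform-price profit satisfies Σ_{k=1}^K α_k·p·(1 − F_k(p)) ≤ (p/K)·Σ_{k=1}^K e^{−k·p} = (p/K)·(1 − e^{−K·p})/(e^p − 1) ≤ 1/K. In particular the optimal uniform-price profit of this instance is at most 1/K. -/
/-- Truncated exponential CDF with rate `lam` on `[0, L]`. -/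
noncomputable def truncExpCdf (lam L p : ℝ) : ℝ :=
  (1 - Real.exp (-lam * p)) / (1 - Real.exp (-lam * L))

lemma truncExpCdf_tail_le (lam L p : ℝ) (hlam : 0 < lam) (hL : 0 < L) (hp : 0 ≤ p) :
    1 - truncExpCdf lam L p ≤ Real.exp (-lam * p) := by
  unfold truncExpCdf
  set a := Real.exp (-lam * p) with ha
  set b := Real.exp (-lam * L) with hb
  have hb1 : b < 1 := by
    rw [hb, Real.exp_lt_one_iff]; nlinarith
  have hb0 : 0 < b := Real.exp_pos _
  have ha1 : a ≤ 1 := by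
    rw [ha, Real.exp_le_one_iff]; nlinarith
  have hD : 0 < 1 - b := by linarith
  have h1 : (1 - a) ≤ (1 - a) / (1 - b) := by
    rw [le_div_iff₀ hD]; nlinarith
  linarith

/-- key sum equality reindex -/
lemma sum_rev (K : ℕ) (p : ℝ) :
    ∑ k : Fin K, Real.exp (-((K : ℝ) - (k.val : ℝ)) * p)
      = ∑ k : Fin K, Real.exp (-((k.val : ℝ) + 1) * p) := by
  apply Fintype.sum_equiv (Fin.revPerm)
  intro x
  congr 1
  have hx : x.val + 1 ≤ K := x.isLt
  have : ((Fin.revPerm x : Fin K).val : ℝ) = (K : ℝ) - (x.val : ℝ) - 1 := by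
    simp [Fin.val_rev]
    push_cast [Nat.cast_sub hx]
    ring
  rw [this]; ring

lemma geom_eq (K : ℕ) (p : ℝ) (hp : 0 < p) :
    ∑ k : Fin K, Real.exp (-((k.val : ℝ) + 1) * p)
      = (1 - Real.exp (-(K : ℝ) * p)) / (Real.exp p - 1) := by
  set x := Real.exp (-p) with hx
  have hx1 : x < 1 := by rw [hx, Real.exp_lt_one_iff]; linarith
  have hE1 : 1 < Real.exp p := by rw [← Real.exp_zero]; exact Real.exp_lt_exp.2 hp
  have hxE : x * Real.exp p = 1 := by
    rw [hx, ← Real.exp_add]; simp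
  have hterm : ∀ k : Fin K, Real.exp (-((k.val : ℝ) + 1) * p) = x ^ (k.val + 1) := by
    intro k
    rw [hx, ← Real.exp_nat_mul]
    congr 1
    push_cast
    ring
  rw [Finset.sum_congr rfl (fun k _ => hterm k)]
  have hxK : x ^ K = Real.exp (-(K : ℝ) * p) := by
    rw [hx, ← Real.exp_nat_mul]; congr 1; ring
  have hgeom : ∑ k : Fin K, x ^ (k.val + 1) = x * ((x ^ K - 1) / (x - 1)) := by
    rw [← geom_sum_eq (ne_of_lt hx1), Finset.mul_sum,
      Fin.sum_univ_eq_sum_range (fun k => x ^ (k + 1))]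
    exact Finset.sum_congr rfl fun k _ => by ring
  rw [hgeom, ← hxK]
  have hx1' : x - 1 ≠ 0 := by intro h; nlinarith
  have hE1' : Real.exp p - 1 ≠ 0 := by intro h; nlinarith
  field_simp
  linear_combination (x ^ K - 1) * hxE

/-- **Uniform-price profit of the truncated-exponential instance is at most `1/K`.**
For `K ≥ 1` segments with rates `λ_k = K - k + 1` (one-based), truncated
exponential CDFs on `[0, L]` and weights `α_k = 1/K`, for every `p ∈ [0, L]`
the aggregate profit satisfies
`Σ_k (1/K) p (1 - F_k p) ≤ (p/K) Σ_{k=1}^K e^{-kp}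
 = (p/K) (1 - e^{-Kp})/(e^p - 1) ≤ 1/K`;
in particular the optimal uniform-price profit is at most `1/K`. -/
theorem truncated_exponential_uniform_profit_bound
    (K : ℕ) (hK : 1 ≤ K) (L : ℝ) (hL : 0 < L) :
    (∀ p ∈ Set.Icc (0:ℝ) L,
      (∑ k : Fin K, (1 / (K : ℝ)) *
          (p * (1 - truncExpCdf ((K : ℝ) - (k.val : ℝ)) L p))
        ≤ (p / K) * ∑ k : Fin K, Real.exp (-((k.val : ℝ) + 1) * p)) ∧
      ((p / K) * ∑ k : Fin K, Real.exp (-((k.val : ℝ) + 1) * p)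
        = (p / K) * ((1 - Real.exp (-(K : ℝ) * p)) / (Real.exp p - 1))) ∧
      (p / K) * ((1 - Real.exp (-(K : ℝ) * p)) / (Real.exp p - 1)) ≤ 1 / K) ∧
    sSup ((fun p => ∑ k : Fin K, (1 / (K : ℝ)) *
          (p * (1 - truncExpCdf ((K : ℝ) - (k.val : ℝ)) L p))) '' Set.Icc 0 L)
      ≤ 1 / K := by
  have hK0 : (0:ℝ) < K := by exact_mod_cast hK
  have main : ∀ p ∈ Set.Icc (0:ℝ) L,
      (∑ k : Fin K, (1 / (K : ℝ)) *
          (p * (1 - truncExpCdf ((K : ℝ) - (k.val : ℝ)) L p))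
        ≤ (p / K) * ∑ k : Fin K, Real.exp (-((k.val : ℝ) + 1) * p)) ∧
      ((p / K) * ∑ k : Fin K, Real.exp (-((k.val : ℝ) + 1) * p)
        = (p / K) * ((1 - Real.exp (-(K : ℝ) * p)) / (Real.exp p - 1))) ∧
      (p / K) * ((1 - Real.exp (-(K : ℝ) * p)) / (Real.exp p - 1)) ≤ 1 / K := by
    intro p hp
    obtain ⟨hp0, hpL⟩ := hp
    refine ⟨?_, ?_, ?_⟩
    · calc ∑ k : Fin K, (1 / (K : ℝ)) *
            (p * (1 - truncExpCdf ((K : ℝ) - (k.val : ℝ)) L p))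
          ≤ ∑ k : Fin K, (1 / (K : ℝ)) *
            (p * Real.exp (-((K : ℝ) - (k.val : ℝ)) * p)) := by
            apply Finset.sum_le_sum
            intro k _
            have hlam : 0 < (K : ℝ) - (k.val : ℝ) := by
              have := k.isLt
              have : (k.val : ℝ) < K := by exact_mod_cast k.isLt
              linarith
            have h := truncExpCdf_tail_le _ L p hlam hL hp0
            have h2 : p * (1 - truncExpCdf ((K : ℝ) - (k.val : ℝ)) L p)
                ≤ p * Real.exp (-((K : ℝ) - (k.val : ℝ)) * p) :=
              mul_le_mul_of_nonneg_left h hp0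
            exact mul_le_mul_of_nonneg_left h2 (by positivity)
      _ = (p / K) * ∑ k : Fin K, Real.exp (-((K : ℝ) - (k.val : ℝ)) * p) := by
            rw [Finset.mul_sum]
            exact Finset.sum_congr rfl fun k _ => by ring
      _ = (p / K) * ∑ k : Fin K, Real.exp (-((k.val : ℝ) + 1) * p) := by
            rw [sum_rev]
    · rcases eq_or_lt_of_le hp0 with h0 | h0
      · rw [← h0]; simp
      · rw [geom_eq K p h0]
    · rcases eq_or_lt_of_le hp0 with h0 | h0
      · rw [← h0]; simp
      · have hE1 : 1 < Real.exp p := by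
          rw [← Real.exp_zero]; exact Real.exp_lt_exp.2 h0
        have hnum : 0 < Real.exp (-(K : ℝ) * p) := Real.exp_pos _
        have hkey : p * (1 - Real.exp (-(K : ℝ) * p)) ≤ Real.exp p - 1 := by
          have h1 : 1 - Real.exp (-(K : ℝ) * p) ≤ 1 := by linarith
          have h2 : p ≤ Real.exp p - 1 := by
            have := Real.add_one_le_exp p; linarith
          nlinarith
        rw [div_mul_eq_mul_div]
        gcongr
        rw [← mul_div_assoc, div_le_one (by linarith : (0:ℝ) < Real.exp p - 1)]
        exact hkey
  refine ⟨main, ?_⟩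
  apply Real.sSup_le
  · rintro x ⟨p, hp, rfl⟩
    obtain ⟨h1, h2, h3⟩ := main p hp
    calc _ ≤ _ := h1
      _ = _ := h2
      _ ≤ _ := h3
  · positivity
end

section
/- Fix K ≥ 1 and L > 1. For k = 1,…,K let λ_k = K − k + 1, F_k(p) = (1 − e^{−λ_k·p})/(1 − e^{−λ_k·L}) on [0, L], π_k(p) = p·(1 − F_k(p)), and α_k = 1/K. Then the optimal third-degree price-discrimination profit satisfies Σ_{k=1}^K α_k·(sup_{p ∈ [0,L]} π_k(p)) ≥ (e·(e^{−1} − e^{−L})²/K)·Σ_{k=1}^K 1/k. -/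
open Real Finset

section TruncExp

variable {lam L : ℝ}

lemma one_sub_exp_neg_mul_pos (hlam : 0 < lam) (hL : 0 < L) : 0 < 1 - exp (-lam * L) := by
  have : -lam * L < 0 := by nlinarith
  linarith [exp_lt_one_iff.mpr this]

lemma truncExpCdf_nonneg (hlam : 0 < lam) (hL : 0 < L) {p : ℝ} (hp : 0 ≤ p) :
    0 ≤ truncExpCdf lam L p := by
  have : exp (-lam * p) ≤ 1 := exp_le_one_iff.mpr (by nlinarith)
  exact div_nonneg (by linarith) (one_sub_exp_neg_mul_pos hlam hL).le

lemma bddAbove_truncExp_profit (hlam : 0 < lam) (hL : 0 < L) :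
    BddAbove ((fun p => p * (1 - truncExpCdf lam L p)) '' Set.Icc 0 L) := by
  refine ⟨L, ?_⟩
  rintro _ ⟨p, ⟨hp0, hpL⟩, rfl⟩
  have := truncExpCdf_nonneg hlam hL hp0
  nlinarith

lemma one_sub_truncExpCdf_inv (hlam : 0 < lam) (hL : 0 < L) :
    1 - truncExpCdf lam L lam⁻¹ = (exp (-1) - exp (-lam * L)) / (1 - exp (-lam * L)) := by
  have hden := (one_sub_exp_neg_mul_pos hlam hL).ne'
  rw [truncExpCdf, neg_mul, mul_inv_cancel₀ hlam.ne', eq_div_iff hden, sub_mul,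
    div_mul_cancel₀ _ hden]
  ring

lemma exp_neg_one_sub_exp_neg_le_one_sub_truncExpCdf_inv (hlam : 1 ≤ lam) (hL : 1 ≤ L) :
    exp (-1) - exp (-L) ≤ 1 - truncExpCdf lam L lam⁻¹ := by
  have hlam0 : 0 < lam := by linarith
  rw [one_sub_truncExpCdf_inv hlam0 (by linarith)]
  have hden := one_sub_exp_neg_mul_pos hlam0 (by linarith : 0 < L)
  have hcL : exp (-lam * L) ≤ exp (-L) := exp_le_exp.mpr (by nlinarith)
  have hbL : exp (-L) ≤ exp (-1) := exp_le_exp.mpr (by linarith)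
  calc exp (-1) - exp (-L) ≤ exp (-1) - exp (-lam * L) := by linarith
    _ ≤ (exp (-1) - exp (-lam * L)) / (1 - exp (-lam * L)) :=
        le_div_self (by linarith) hden (by linarith [exp_pos (-lam * L)])

lemma exp_one_mul_sq_le (hL : 1 ≤ L) :
    exp 1 * (exp (-1) - exp (-L)) ^ 2 ≤ exp (-1) - exp (-L) := by
  have hnonneg : 0 ≤ exp (-1) - exp (-L) := sub_nonneg.mpr (exp_le_exp.mpr (by linarith))
  have hle_one : exp 1 * (exp (-1) - exp (-L)) ≤ 1 := by
    rw [mul_sub, ← exp_add, ← exp_add, add_neg_cancel, exp_zero]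
    linarith [exp_pos (1 + -L)]
  nlinarith

theorem div_le_sSup_truncExp_profit (hlam : 1 ≤ lam) (hL : 1 ≤ L) :
    exp 1 * (exp (-1) - exp (-L)) ^ 2 / lam ≤
      sSup ((fun p => p * (1 - truncExpCdf lam L p)) '' Set.Icc 0 L) := by
  have hlam0 : 0 < lam := by linarith
  have hmem : lam⁻¹ ∈ Set.Icc 0 L := ⟨by positivity, (inv_le_one_of_one_le₀ hlam).trans hL⟩
  refine le_trans ?_ (le_csSup (bddAbove_truncExp_profit hlam0 (by linarith)) ⟨_, hmem, rfl⟩)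
  rw [div_eq_inv_mul]
  exact mul_le_mul_of_nonneg_left
    ((exp_one_mul_sq_le hL).trans (exp_neg_one_sub_exp_neg_le_one_sub_truncExpCdf_inv hlam hL))
    (inv_nonneg.mpr hlam0.le)

end TruncExp

lemma sum_fin_natCast_sub_eq_sum_range {M : Type*} [AddCommMonoid M] (K : ℕ) (g : ℝ → M) :
    ∑ k : Fin K, g ((K : ℝ) - k) = ∑ j ∈ range K, g ((j : ℝ) + 1) := by
  rw [Fin.sum_univ_eq_sum_range (fun i => g ((K : ℝ) - i)), ← sum_range_reflect]
  refine sum_congr rfl fun j hj => congrArg g ?_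
  have hj : j + 1 ≤ K := mem_range.mp hj
  rw [Nat.sub_sub, Nat.cast_sub (by omega)]
  push_cast
  ring

lemma one_le_natCast_sub_val {K : ℕ} (k : Fin K) : (1 : ℝ) ≤ (K : ℝ) - k := by
  have : (k : ℝ) + 1 ≤ K := by exact_mod_cast k.isLt
  linarith

theorem truncated_exponential_discrimination_profit_bound_general
    (K : ℕ) (L : ℝ) (hL : 1 < L) :
    ∑ k : Fin K, (1 / (K : ℝ)) *
        sSup ((fun p => p * (1 - truncExpCdf ((K : ℝ) - (k.val : ℝ)) L p))
          '' Set.Icc 0 L)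
      ≥ (Real.exp 1 * (Real.exp (-1) - Real.exp (-L)) ^ 2 / K) *
        ∑ j ∈ Finset.range K, 1 / ((j : ℝ) + 1) := by
  set D := exp 1 * (exp (-1) - exp (-L)) ^ 2
  calc D / K * ∑ j ∈ range K, 1 / ((j : ℝ) + 1)
      = ∑ j ∈ range K, 1 / (K : ℝ) * (D / ((j : ℝ) + 1)) := by
        rw [mul_sum]; congr! 1; ring
    _ = ∑ k : Fin K, 1 / (K : ℝ) * (D / ((K : ℝ) - k)) :=
        (sum_fin_natCast_sub_eq_sum_range K fun x => 1 / (K : ℝ) * (D / x)).symm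
    _ ≤ _ := sum_le_sum fun k _ => mul_le_mul_of_nonneg_left
        (div_le_sSup_truncExp_profit (one_le_natCast_sub_val k) hL.le) (by positivity)

/-- **Discrimination profit of the truncated-exponential instance.**
For `K ≥ 1` segments with rates `λ_k = K - k + 1` (one-based), truncated
exponential CDFs on `[0, L]` (`L > 1`), profit functions
`π_k p = p (1 - F_k p)` and weights `α_k = 1/K`, the optimal third-degree
price-discrimination profit satisfies
`Σ_k (1/K) sup_{p ∈ [0,L]} π_k(p) ≥ (e (e⁻¹ - e^{-L})² / K) Σ_{k=1}^K 1/k`. -/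
theorem truncated_exponential_discrimination_profit_bound
    (K : ℕ) (hK : 1 ≤ K) (L : ℝ) (hL : 1 < L) :
    ∑ k : Fin K, (1 / (K : ℝ)) *
        sSup ((fun p => p * (1 - truncExpCdf ((K : ℝ) - (k.val : ℝ)) L p))
          '' Set.Icc 0 L)
      ≥ (Real.exp 1 * (Real.exp (-1) - Real.exp (-L)) ^ 2 / K) *
        ∑ j ∈ Finset.range K, 1 / ((j : ℝ) + 1) :=
  truncated_exponential_discrimination_profit_bound_general K L hL
end

section
/- Fix L > 1. For each K ≥ 1 consider the K-segment instance with α_k = 1/K, λ_k = K − k + 1 and truncated exponential CDFs F_k(p) = (1 − e^{−λ_k·p})/(1 − e^{−λ_k·L}) on the common bounded support [0, L]. Then the profit ratio satisfies Π^U/Π* ≤ 1/(e·(e^{−1} − e^{−L})²·Σ_{k=1}^K 1/k), and hence Π^U/Π* → 0 as K → ∞. Thus even for distributions with monotone (non-increasing inverse) hazard rate and common bounded support, the optimal uniform price can yield an arbitrarily small fraction of the optimal third-degree price-discrimination profit as the number of segments increases. -/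
open Filter

/-- Optimal uniform-price profit of the `K`-segment truncated-exponential
instance with rates `λ_k = K - k + 1` (one-based), common support `[0, L]`
and weights `α_k = 1/K`. -/
noncomputable def truncExpPiU (K : ℕ) (L : ℝ) : ℝ :=
  sSup ((fun p => ∑ k : Fin K, (1 / (K : ℝ)) *
      (p * (1 - truncExpCdf ((K : ℝ) - (k.val : ℝ)) L p))) '' Set.Icc 0 L)

/-- Optimal third-degree price-discrimination profit of the same instance. -/
noncomputable def truncExpPiStar (K : ℕ) (L : ℝ) : ℝ :=
  ∑ k : Fin K, (1 / (K : ℝ)) *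
    sSup ((fun p => p * (1 - truncExpCdf ((K : ℝ) - (k.val : ℝ)) L p))
      '' Set.Icc 0 L)

lemma survival_eq {lam L p : ℝ} (hlam : 0 < lam) (hL : 0 < L) :
    1 - truncExpCdf lam L p
      = (Real.exp (-lam * p) - Real.exp (-lam * L)) / (1 - Real.exp (-lam * L)) := by
  have hb : Real.exp (-lam * L) < 1 := by
    apply Real.exp_lt_one_iff.mpr; nlinarith
  have hb' : 1 - Real.exp (-lam * L) ≠ 0 := by linarith
  unfold truncExpCdf
  set a := Real.exp (-lam * p)
  set b := Real.exp (-lam * L)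
  rw [eq_div_iff hb', sub_mul, div_mul_cancel₀ _ hb']
  ring

lemma survival_le {lam L p : ℝ} (hlam : 0 < lam) (hL : 0 < L) (hp : 0 ≤ p) (hpL : p ≤ L) :
    1 - truncExpCdf lam L p ≤ Real.exp (-lam * p) := by
  rw [survival_eq hlam hL]
  have hb : Real.exp (-lam * L) < 1 := Real.exp_lt_one_iff.mpr (by nlinarith)
  have hb0 : 0 < Real.exp (-lam * L) := Real.exp_pos _
  have ha1 : Real.exp (-lam * p) ≤ 1 := Real.exp_le_one_iff.mpr (by nlinarith)
  rw [div_le_iff₀ (by linarith)]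
  nlinarith

lemma survival_ge {lam L p : ℝ} (hlam : 0 < lam) (hL : 0 < L) (hpL : p ≤ L) :
    Real.exp (-lam * p) - Real.exp (-lam * L) ≤ 1 - truncExpCdf lam L p := by
  rw [survival_eq hlam hL]
  have hb : Real.exp (-lam * L) < 1 := Real.exp_lt_one_iff.mpr (by nlinarith)
  have hab : Real.exp (-lam * L) ≤ Real.exp (-lam * p) :=
    Real.exp_le_exp.mpr (by nlinarith)
  rw [le_div_iff₀ (by linarith)]
  nlinarith [Real.exp_pos (-lam * L)]

lemma step_ineq (j : ℕ) {p : ℝ} (hp : 0 ≤ p) :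
    p * Real.exp (-((j : ℝ) + 1) * p)
      ≤ Real.exp (-(j : ℝ) * p) - Real.exp (-((j : ℝ) + 1) * p) := by
  have h1 := Real.add_one_le_exp p
  have h2 : Real.exp (-(j : ℝ) * p) = Real.exp p * Real.exp (-((j : ℝ) + 1) * p) := by
    rw [← Real.exp_add]; ring_nf
  nlinarith [Real.exp_pos (-((j : ℝ) + 1) * p)]

lemma sum_p_exp_le (K : ℕ) {p : ℝ} (hp : 0 ≤ p) :
    ∑ k : Fin K, p * Real.exp (-((K : ℝ) - (k.val : ℝ)) * p) ≤ 1 := by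
  rw [Fin.sum_univ_eq_sum_range (fun k => p * Real.exp (-((K : ℝ) - (k : ℝ)) * p)) K,
    ← Finset.sum_range_reflect]
  have hsum : ∀ j ∈ Finset.range K,
      p * Real.exp (-((K : ℝ) - ((K - 1 - j : ℕ) : ℝ)) * p)
        ≤ Real.exp (-(j : ℝ) * p) - Real.exp (-(((j + 1 : ℕ)) : ℝ) * p) := by
    intro j hj
    have hj' : j < K := Finset.mem_range.mp hj
    have hcast : ((K - 1 - j : ℕ) : ℝ) = (K : ℝ) - ((j : ℝ) + 1) := by
      have h : (K - 1 - j : ℕ) = K - (j + 1) := by omega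
      rw [h, Nat.cast_sub (by omega)]
      push_cast; ring
    rw [hcast, show -((K : ℝ) - ((K : ℝ) - ((j : ℝ) + 1))) * p = -((j : ℝ) + 1) * p by ring,
      show (((j + 1 : ℕ)) : ℝ) = (j : ℝ) + 1 by push_cast; ring]
    exact step_ineq j hp
  calc ∑ j ∈ Finset.range K, p * Real.exp (-((K : ℝ) - ((K - 1 - j : ℕ) : ℝ)) * p)
      ≤ ∑ j ∈ Finset.range K,
          (Real.exp (-(j : ℝ) * p) - Real.exp (-(((j + 1 : ℕ)) : ℝ) * p)) :=
        Finset.sum_le_sum hsum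
    _ = Real.exp (-((0 : ℕ) : ℝ) * p) - Real.exp (-((K : ℕ) : ℝ) * p) :=
        Finset.sum_range_sub' (fun j : ℕ => Real.exp (-(j : ℝ) * p)) K
    _ ≤ 1 := by
        simp only [Nat.cast_zero, neg_zero, zero_mul, Real.exp_zero]
        nlinarith [Real.exp_pos (-((K : ℕ) : ℝ) * p)]

lemma harmonic_reindex (K : ℕ) :
    ∑ k : Fin K, 1 / ((K : ℝ) - (k.val : ℝ)) = ∑ j ∈ Finset.range K, 1 / ((j : ℝ) + 1) := by
  rw [Fin.sum_univ_eq_sum_range (fun k => 1 / ((K : ℝ) - (k : ℝ))) K,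
    ← Finset.sum_range_reflect]
  apply Finset.sum_congr rfl
  intro j hj
  have hj' : j < K := Finset.mem_range.mp hj
  have hcast : ((K - 1 - j : ℕ) : ℝ) = (K : ℝ) - ((j : ℝ) + 1) := by
    have h : (K - 1 - j : ℕ) = K - (j + 1) := by omega
    rw [h, Nat.cast_sub (by omega)]
    push_cast; ring
  rw [hcast]
  congr 1
  ring

lemma lam_pos {K : ℕ} (k : Fin K) : (1 : ℝ) ≤ (K : ℝ) - (k.val : ℝ) := by
  have h : (k.val : ℝ) + 1 ≤ (K : ℝ) := by exact_mod_cast Nat.succ_le_of_lt k.isLt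
  linarith

lemma piU_val_le {K : ℕ} (hK : 1 ≤ K) {L : ℝ} (hL : 1 < L) {p : ℝ}
    (hp : p ∈ Set.Icc (0 : ℝ) L) :
    ∑ k : Fin K, (1 / (K : ℝ)) *
      (p * (1 - truncExpCdf ((K : ℝ) - (k.val : ℝ)) L p)) ≤ 1 / (K : ℝ) := by
  obtain ⟨hp0, hpL⟩ := hp
  have hL0 : (0 : ℝ) < L := by linarith
  rw [← Finset.mul_sum]
  have hsum : ∑ k : Fin K, p * (1 - truncExpCdf ((K : ℝ) - (k.val : ℝ)) L p) ≤ 1 := by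
    calc ∑ k : Fin K, p * (1 - truncExpCdf ((K : ℝ) - (k.val : ℝ)) L p)
        ≤ ∑ k : Fin K, p * Real.exp (-((K : ℝ) - (k.val : ℝ)) * p) := by
          apply Finset.sum_le_sum
          intro k _
          exact mul_le_mul_of_nonneg_left
            (survival_le (by linarith [lam_pos k]) hL0 hp0 hpL) hp0
      _ ≤ 1 := sum_p_exp_le K hp0
  have hKinv : (0 : ℝ) ≤ 1 / (K : ℝ) := by positivity
  calc (1 / (K : ℝ)) * ∑ k : Fin K, p * (1 - truncExpCdf ((K : ℝ) - (k.val : ℝ)) L p)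
      ≤ (1 / (K : ℝ)) * 1 := mul_le_mul_of_nonneg_left hsum hKinv
    _ = 1 / (K : ℝ) := mul_one _

lemma piU_le {K : ℕ} (hK : 1 ≤ K) {L : ℝ} (hL : 1 < L) :
    truncExpPiU K L ≤ 1 / (K : ℝ) := by
  apply Real.sSup_le
  · rintro x ⟨p, hp, rfl⟩
    exact piU_val_le hK hL hp
  · positivity

lemma piU_nonneg {K : ℕ} (hK : 1 ≤ K) {L : ℝ} (hL : 1 < L) :
    0 ≤ truncExpPiU K L := by
  have hmem : (0 : ℝ) ∈ ((fun p => ∑ k : Fin K, (1 / (K : ℝ)) *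
      (p * (1 - truncExpCdf ((K : ℝ) - (k.val : ℝ)) L p))) '' Set.Icc 0 L) := by
    refine ⟨0, ⟨le_refl _, by linarith⟩, by simp⟩
  have hbdd : BddAbove ((fun p => ∑ k : Fin K, (1 / (K : ℝ)) *
      (p * (1 - truncExpCdf ((K : ℝ) - (k.val : ℝ)) L p))) '' Set.Icc 0 L) := by
    refine ⟨1 / (K : ℝ), ?_⟩
    rintro x ⟨p, hp, rfl⟩
    exact piU_val_le hK hL hp
  exact le_csSup hbdd hmem

lemma piStar_term_ge {K : ℕ} (k : Fin K) {L : ℝ} (hL : 1 < L) :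
    (Real.exp (-1) - Real.exp (-L)) / ((K : ℝ) - (k.val : ℝ))
      ≤ sSup ((fun p => p * (1 - truncExpCdf ((K : ℝ) - (k.val : ℝ)) L p))
        '' Set.Icc 0 L) := by
  set lam := (K : ℝ) - (k.val : ℝ) with hlamdef
  have hlam1 : (1 : ℝ) ≤ lam := lam_pos k
  have hlam0 : (0 : ℝ) < lam := by linarith
  have hL0 : (0 : ℝ) < L := by linarith
  have hbdd : BddAbove ((fun p => p * (1 - truncExpCdf lam L p)) '' Set.Icc 0 L) := by
    refine ⟨L, ?_⟩
    rintro x ⟨p, ⟨hp0, hpL⟩, rfl⟩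
    have h1 : 1 - truncExpCdf lam L p ≤ Real.exp (-lam * p) :=
      survival_le hlam0 hL0 hp0 hpL
    have h2 : Real.exp (-lam * p) ≤ 1 := Real.exp_le_one_iff.mpr (by nlinarith)
    calc p * (1 - truncExpCdf lam L p) ≤ p * Real.exp (-lam * p) :=
          mul_le_mul_of_nonneg_left h1 hp0
      _ ≤ p * 1 := mul_le_mul_of_nonneg_left h2 hp0
      _ ≤ L := by linarith
  have hp0mem : (1 / lam : ℝ) ∈ Set.Icc (0 : ℝ) L := by
    constructor
    · positivity
    · have h : 1 / lam ≤ 1 / 1 := one_div_le_one_div_of_le one_pos hlam1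
      rw [div_one] at h
      linarith
  have hle := le_csSup hbdd ⟨1 / lam, hp0mem, rfl⟩
  refine le_trans ?_ hle
  have hsurv : Real.exp (-lam * (1 / lam)) - Real.exp (-lam * L)
      ≤ 1 - truncExpCdf lam L (1 / lam) := survival_ge hlam0 hL0 hp0mem.2
  have hcancel : -lam * (1 / lam) = -1 := by field_simp
  rw [hcancel] at hsurv
  have hexp : Real.exp (-lam * L) ≤ Real.exp (-L) :=
    Real.exp_le_exp.mpr (by nlinarith)
  have hkey : Real.exp (-1) - Real.exp (-L) ≤ 1 - truncExpCdf lam L (1 / lam) := by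
    linarith
  calc (Real.exp (-1) - Real.exp (-L)) / lam
      = (1 / lam) * (Real.exp (-1) - Real.exp (-L)) := by ring
    _ ≤ (1 / lam) * (1 - truncExpCdf lam L (1 / lam)) :=
        mul_le_mul_of_nonneg_left hkey (by positivity)

lemma piStar_ge {K : ℕ} (hK : 1 ≤ K) {L : ℝ} (hL : 1 < L) :
    ((Real.exp (-1) - Real.exp (-L)) / (K : ℝ)) *
      (∑ j ∈ Finset.range K, 1 / ((j : ℝ) + 1)) ≤ truncExpPiStar K L := by
  unfold truncExpPiStar
  have h1 : ∑ k : Fin K, (1 / (K : ℝ)) *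
      ((Real.exp (-1) - Real.exp (-L)) / ((K : ℝ) - (k.val : ℝ)))
      ≤ ∑ k : Fin K, (1 / (K : ℝ)) *
        sSup ((fun p => p * (1 - truncExpCdf ((K : ℝ) - (k.val : ℝ)) L p))
          '' Set.Icc 0 L) := by
    apply Finset.sum_le_sum
    intro k _
    exact mul_le_mul_of_nonneg_left (piStar_term_ge k hL) (by positivity)
  refine le_trans (le_of_eq ?_) h1
  rw [← harmonic_reindex K, Finset.mul_sum]
  apply Finset.sum_congr rfl
  intro k _
  ring

/-- **Failure of monotone hazard rate distributions.**
For the truncated-exponential instance (which has monotone non-increasing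
inverse hazard rate and common bounded support `[0, L]`, `L > 1`), the profit
ratio satisfies `Π^U/Π* ≤ 1/(e (e⁻¹ - e^{-L})² Σ_{k=1}^K 1/k)` and hence tends
to `0` as the number of segments `K → ∞`: uniform pricing can yield an
arbitrarily small fraction of the discrimination profit. -/
theorem truncated_exponential_ratio_tendsto_zero (L : ℝ) (hL : 1 < L) :
    (∀ K : ℕ, 1 ≤ K →
      truncExpPiU K L / truncExpPiStar K L
        ≤ 1 / (Real.exp 1 * (Real.exp (-1) - Real.exp (-L)) ^ 2 *
            ∑ j ∈ Finset.range K, 1 / ((j : ℝ) + 1))) ∧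
    Tendsto (fun K : ℕ => truncExpPiU K L / truncExpPiStar K L)
      atTop (nhds 0) := by
  have hc : 0 < Real.exp (-1) - Real.exp (-L) :=
    sub_pos.mpr (Real.exp_lt_exp.mpr (by linarith))
  set c := Real.exp (-1) - Real.exp (-L) with hcdef
  have hec : Real.exp 1 * c ≤ 1 := by
    have h2 : Real.exp 1 * Real.exp (-1) = 1 := by
      rw [Real.exp_neg]; exact mul_inv_cancel₀ (ne_of_gt (Real.exp_pos 1))
    nlinarith [Real.exp_pos (-L), Real.exp_pos 1]
  have hstarpos : ∀ K : ℕ, 1 ≤ K → 0 < truncExpPiStar K L := by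
    intro K hK
    have hH : 0 < ∑ j ∈ Finset.range K, 1 / ((j : ℝ) + 1) := by
      apply Finset.sum_pos
      · intro i _; positivity
      · exact Finset.nonempty_range_iff.mpr (by omega)
    have hKpos : (0 : ℝ) < (K : ℝ) := by exact_mod_cast hK
    have := piStar_ge hK hL
    have hpos : 0 < (c / (K : ℝ)) * ∑ j ∈ Finset.range K, 1 / ((j : ℝ) + 1) := by
      positivity
    linarith
  have part1 : ∀ K : ℕ, 1 ≤ K →
      truncExpPiU K L / truncExpPiStar K L
        ≤ 1 / (Real.exp 1 * c ^ 2 * ∑ j ∈ Finset.range K, 1 / ((j : ℝ) + 1)) := by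
    intro K hK
    set H := ∑ j ∈ Finset.range K, 1 / ((j : ℝ) + 1) with hHdef
    have hH : 0 < H := by
      apply Finset.sum_pos
      · intro i _; positivity
      · exact Finset.nonempty_range_iff.mpr (by omega)
    have hKpos : (0 : ℝ) < (K : ℝ) := by exact_mod_cast hK
    have hstar : (c / (K : ℝ)) * H ≤ truncExpPiStar K L := piStar_ge hK hL
    have hspos : 0 < (c / (K : ℝ)) * H := by positivity
    have hratio : truncExpPiU K L / truncExpPiStar K L
        ≤ (1 / (K : ℝ)) / ((c / (K : ℝ)) * H) :=
      div_le_div₀ (by positivity) (piU_le hK hL) hspos hstar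
    have heq : (1 / (K : ℝ)) / ((c / (K : ℝ)) * H) = 1 / (c * H) := by
      field_simp
    rw [heq] at hratio
    refine hratio.trans ?_
    apply one_div_le_one_div_of_le (by positivity)
    have hmul : Real.exp 1 * c * (c * H) ≤ 1 * (c * H) :=
      mul_le_mul_of_nonneg_right hec (by positivity)
    nlinarith [hmul]
  refine ⟨part1, ?_⟩
  apply squeeze_zero'
    (g := fun K : ℕ => 1 / (Real.exp 1 * c ^ 2 * ∑ j ∈ Finset.range K, 1 / ((j : ℝ) + 1)))
  · filter_upwards [eventually_ge_atTop 1] with K hK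
    exact div_nonneg (piU_nonneg hK hL) (hstarpos K hK).le
  · filter_upwards [eventually_ge_atTop 1] with K hK
    exact part1 K hK
  · have hA : Tendsto (fun K : ℕ =>
        Real.exp 1 * c ^ 2 * ∑ j ∈ Finset.range K, 1 / ((j : ℝ) + 1)) atTop atTop :=
      Tendsto.const_mul_atTop (by positivity)
        Real.tendsto_sum_range_one_div_nat_succ_atTop
    have h0 := hA.inv_tendsto_atTop
    simpa only [Pi.inv_def, one_div] using h0
end

section
/- Consider the class 𝒟 of Dirac K-segment instances: weights α_1,…,α_K ≥ 0 with Σ_k α_k = 1 and values v_1,…,v_K > 0, with Π* = Σ_k α_k·v_k > 0 and Π^U = sup_{p > 0} Σ_k α_k·p·𝟙{p ≤ v_k}. Then the infimum over 𝒟 of the profit ratio Π^U/Π* equals exactly 1/K; i.e., every Dirac instance satisfies Π^U ≥ Π*/K, and for every δ > 0 there is a Dirac instance with Π^U/Π* < 1/K + δ. -/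
/-!
Lower bound: pricing at `v j` already sells to segment `j`, so `Π^U ≥ max_j α_j v_j`, which is at
least the average `Π*/K` of the surpluses `α_j v_j`.

Upper bound: take `v_k = r⁻ᵏ` and `α_k ∝ rᵏ` for `k < K`, so that every segment has the same
surplus `α_k v_k`. A uniform price `p` only sells to the segments with `v_k ≥ p`; if `m` is the
first of them then `p rᵐ ≤ 1`, and the masses of the later ones decay geometrically, so
`Π^U ≤ Π*/(K(1 - r))`, which tends to `Π*/K` as `r → 0`.
-/

open Finset

noncomputable section

section Profit

variable {ι : Type*} [Fintype ι] (α v : ι → ℝ)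

def priceProfit (p : ℝ) : ℝ := ∑ k, α k * if p ≤ v k then p else 0

def uniformProfit : ℝ := sSup (priceProfit α v '' Set.Ioi 0)

variable {α v}

theorem priceProfit_eq_mul_sum_filter (p : ℝ) :
    priceProfit α v p = p * ∑ k with p ≤ v k, α k := by
  rw [priceProfit, sum_filter, mul_sum]
  exact sum_congr rfl fun k _ => by split_ifs <;> ring

theorem priceProfit_le_sum (hα : ∀ k, 0 ≤ α k) (hv : ∀ k, 0 ≤ v k) (p : ℝ) :
    priceProfit α v p ≤ ∑ k, α k * v k := by
  refine sum_le_sum fun k _ => mul_le_mul_of_nonneg_left ?_ (hα k)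
  split_ifs with h
  exacts [h, hv k]

theorem mul_le_priceProfit (hα : ∀ k, 0 ≤ α k) (hv : ∀ k, 0 ≤ v k) (j : ι) :
    α j * v j ≤ priceProfit α v (v j) := by
  have hterm : ∀ k, 0 ≤ α k * if v j ≤ v k then v j else 0 := fun k => by
    have := hv j; have := hα k; split_ifs <;> positivity
  calc α j * v j = α j * if v j ≤ v j then v j else 0 := by rw [if_pos le_rfl]
    _ ≤ priceProfit α v (v j) := single_le_sum (fun k _ => hterm k) (mem_univ j)

theorem mul_le_uniformProfit (hα : ∀ k, 0 ≤ α k) (hv : ∀ k, 0 < v k) (j : ι) :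
    α j * v j ≤ uniformProfit α v := by
  have hbdd : BddAbove (priceProfit α v '' Set.Ioi 0) :=
    ⟨_, Set.forall_mem_image.2 fun p _ => priceProfit_le_sum hα (fun k => (hv k).le) p⟩
  exact (mul_le_priceProfit hα (fun k => (hv k).le) j).trans
    (le_csSup hbdd (Set.mem_image_of_mem _ (hv j)))

theorem sum_div_card_le_uniformProfit [Nonempty ι] (hα : ∀ k, 0 ≤ α k)
    (hv : ∀ k, 0 < v k) :
    (∑ k, α k * v k) / Fintype.card ι ≤ uniformProfit α v := by
  obtain ⟨j, -, hj⟩ := exists_le_of_le_expect univ_nonempty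
    (Fintype.expect_eq_sum_div_card (fun k => α k * v k)).ge
  exact hj.trans (mul_le_uniformProfit hα hv j)

theorem uniformProfit_le {B : ℝ} (hB : ∀ p, 0 < p → priceProfit α v p ≤ B) :
    uniformProfit α v ≤ B :=
  csSup_le (Set.nonempty_Ioi.image _) (Set.forall_mem_image.2 hB)

end Profit

theorem sum_pow_le_of_forall_le {r : ℝ} (hr0 : 0 ≤ r) (hr1 : r < 1) {s : Finset ℕ} {m : ℕ}
    (hm : ∀ k ∈ s, m ≤ k) : ∑ k ∈ s, r ^ k ≤ r ^ m / (1 - r) := by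
  have hsub : s ⊆ Ico m (s.sup id + 1) := fun k hk =>
    mem_Ico.2 ⟨hm k hk, Nat.lt_succ_of_le (le_sup (f := id) hk)⟩
  exact (sum_le_sum_of_subset_of_nonneg hsub fun k _ _ => pow_nonneg hr0 k).trans
    (geom_sum_Ico_le_of_lt_one hr0 hr1)

section Geometric

variable (K : ℕ) (r : ℝ)

def geomWeight (k : Fin K) : ℝ := r ^ (k : ℕ) / ∑ i : Fin K, r ^ (i : ℕ)

def geomValue (k : Fin K) : ℝ := (r ^ (k : ℕ))⁻¹

variable {K r}

theorem sum_pow_fin_pos [NeZero K] (hr : 0 < r) : 0 < ∑ i : Fin K, r ^ (i : ℕ) :=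
  sum_pos (fun _ _ => pow_pos hr _) univ_nonempty

theorem geomWeight_nonneg (hr : 0 < r) (k : Fin K) : 0 ≤ geomWeight K r k := by
  unfold geomWeight; positivity

theorem geomValue_pos (hr : 0 < r) (k : Fin K) : 0 < geomValue K r k := by
  unfold geomValue; positivity

theorem sum_geomWeight [NeZero K] (hr : 0 < r) : ∑ k, geomWeight K r k = 1 := by
  simp only [geomWeight]
  rw [← sum_div, div_self (sum_pow_fin_pos hr).ne']

theorem sum_geomWeight_mul_geomValue (hr : 0 < r) :
    ∑ k, geomWeight K r k * geomValue K r k = K / ∑ i : Fin K, r ^ (i : ℕ) := by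
  have hterm (k : Fin K) :
      geomWeight K r k * geomValue K r k = (∑ i : Fin K, r ^ (i : ℕ))⁻¹ := by
    rw [geomWeight, geomValue, div_mul_eq_mul_div, mul_inv_cancel₀ (pow_ne_zero _ hr.ne'),
      one_div]
  simp [hterm, div_eq_mul_inv]

theorem priceProfit_geom_le (hr0 : 0 < r) (hr1 : r < 1) {p : ℝ} (hp : 0 ≤ p) :
    priceProfit (geomWeight K r) (geomValue K r) p
      ≤ 1 / ((1 - r) * ∑ i : Fin K, r ^ (i : ℕ)) := by
  classical
  set S := ∑ i : Fin K, r ^ (i : ℕ)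
  rw [priceProfit_eq_mul_sum_filter]
  set s := ({k | p ≤ geomValue K r k} : Finset (Fin K))
  have h1r : 0 < 1 - r := sub_pos.2 hr1
  rcases s.eq_empty_or_nonempty with hs | hs
  · rw [hs, sum_empty, mul_zero]
    have : 0 ≤ S := sum_nonneg fun _ _ => pow_nonneg hr0.le _
    positivity
  set m := s.min' hs
  have hpm : p * r ^ (m : ℕ) ≤ 1 := by
    have hm : p ≤ (r ^ (m : ℕ))⁻¹ := (mem_filter.1 (s.min'_mem hs)).2
    calc p * r ^ (m : ℕ) ≤ (r ^ (m : ℕ))⁻¹ * r ^ (m : ℕ) := by gcongr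
      _ = 1 := inv_mul_cancel₀ (pow_ne_zero _ hr0.ne')
  have hgeom : ∑ k ∈ s, r ^ (k : ℕ) ≤ r ^ (m : ℕ) / (1 - r) := by
    calc ∑ k ∈ s, r ^ (k : ℕ) = ∑ n ∈ s.map Fin.valEmbedding, r ^ n :=
          (sum_map s Fin.valEmbedding (r ^ ·)).symm
      _ ≤ r ^ (m : ℕ) / (1 - r) := sum_pow_le_of_forall_le hr0.le hr1 <| by
        simpa using fun k hk => s.min'_le k hk
  calc p * ∑ k ∈ s, geomWeight K r k = p * (∑ k ∈ s, r ^ (k : ℕ)) / S := by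
        simp only [geomWeight, ← sum_div, mul_div_assoc]; rfl
    _ ≤ p * (r ^ (m : ℕ) / (1 - r)) / S := by gcongr
    _ = p * r ^ (m : ℕ) / ((1 - r) * S) := by rw [mul_div_assoc', div_div]
    _ ≤ 1 / ((1 - r) * S) := by gcongr

theorem uniformProfit_geom_div_le [NeZero K] (hr0 : 0 < r) (hr1 : r < 1) :
    uniformProfit (geomWeight K r) (geomValue K r) / ∑ k, geomWeight K r k * geomValue K r k
      ≤ 1 / ((1 - r) * K) := by
  have hS := sum_pow_fin_pos (K := K) hr0
  have hK : (0 : ℝ) < K := Nat.cast_pos.2 (NeZero.pos K)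
  have h1r : 0 < 1 - r := sub_pos.2 hr1
  have hsup : uniformProfit (geomWeight K r) (geomValue K r)
      ≤ 1 / ((1 - r) * ∑ i : Fin K, r ^ (i : ℕ)) :=
    uniformProfit_le fun _ hp => priceProfit_geom_le hr0 hr1 hp.le
  rw [sum_geomWeight_mul_geomValue hr0]
  calc _ ≤ 1 / ((1 - r) * ∑ i : Fin K, r ^ (i : ℕ)) / (K / ∑ i : Fin K, r ^ (i : ℕ)) := by
        gcongr
    _ = 1 / ((1 - r) * K) := by field_simp

end Geometric

end

/-- **Worst-case performance over Dirac instances is exactly `1/K`.**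
Every Dirac `K`-segment instance (weights `α k ≥ 0` summing to one, values
`v k > 0`, uniform-price profit `Π^U = sup_{p>0} Σ_k α_k p 𝟙{p ≤ v_k}` and
full-surplus profit `Π* = Σ_k α_k v_k > 0`) satisfies `Π^U ≥ Π*/K`, and for
every `δ > 0` some Dirac instance has profit ratio `Π^U/Π* < 1/K + δ`; i.e.
the infimum of the profit ratio over Dirac instances equals `1/K`. -/
theorem dirac_worst_case_ratio (K : ℕ) (hK : 1 ≤ K) :
    (∀ α v : Fin K → ℝ, (∀ k, 0 ≤ α k) → (∑ k, α k = 1) →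
      (∀ k, 0 < v k) → 0 < ∑ k, α k * v k →
      sSup ((fun p => ∑ k, α k * (if p ≤ v k then p else 0)) '' Set.Ioi 0)
        ≥ (∑ k, α k * v k) / K) ∧
    (∀ δ : ℝ, 0 < δ →
      ∃ α v : Fin K → ℝ, (∀ k, 0 ≤ α k) ∧ (∑ k, α k = 1) ∧
        (∀ k, 0 < v k) ∧ 0 < ∑ k, α k * v k ∧
        sSup ((fun p => ∑ k, α k * (if p ≤ v k then p else 0)) '' Set.Ioi 0) /
            (∑ k, α k * v k) < 1 / K + δ) := by
  have : NeZero K := ⟨by omega⟩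
  refine ⟨fun α v hα _ hv _ => ?_, fun δ hδ => ?_⟩
  · have h := sum_div_card_le_uniformProfit hα hv
    rw [Fintype.card_fin] at h
    exact h
  set r := δ / (2 + δ)
  have hr0 : 0 < r := by positivity
  have hr1 : r < 1 := (div_lt_one (by positivity)).2 (by linarith)
  have hratio : 1 / ((1 - r) * K) = 1 / K + δ / (2 * K) := by
    simp only [r]; field_simp; ring
  refine ⟨geomWeight K r, geomValue K r, geomWeight_nonneg hr0, sum_geomWeight hr0,
    geomValue_pos hr0, ?_, (uniformProfit_geom_div_le hr0 hr1).trans_lt ?_⟩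
  · rw [sum_geomWeight_mul_geomValue hr0]
    have := sum_pow_fin_pos (K := K) hr0
    positivity
  · rw [hratio]
    gcongr
    exact div_lt_self hδ (by norm_cast; omega)
end

section
/- Let θ̄ > 0 and let g : ℝ → ℝ be integrable on [0, θ̄]. Then the supremum, over all nondecreasing functions x : [0, θ̄] → [0, 1], of ∫_0^{θ̄} x(z)·g(z) dz equals sup_{p ∈ [0, θ̄]} ∫_p^{θ̄} g(z) dz. In particular, the supremum over monotone allocations is attained (in the limit) by a threshold (bang-bang) allocation x(z) = 𝟙{z ≥ p}. -/
/-!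
A monotone allocation `x` with values in `[0, 1]` is a mixture of threshold allocations:
by the layer-cake formula `∫ x g = ∫₀¹ (∫_{x ≥ t} g) dt`, and every superlevel set
`{x ≥ t}` of a monotone function is, up to one point, an interval `(p, θ]`. Hence every
inner integral is the payoff `∫_p^θ g` of a threshold allocation, and so is at most the
supremum of these payoffs; conversely, threshold allocations are monotone allocations.
-/

open intervalIntegral MeasureTheory Set

theorem IsUpperSet.exists_threshold_of_le {α : Type*} [ConditionallyCompleteLinearOrder α]
    {U : Set α} (hU : IsUpperSet U) {a b : α} (hab : a ≤ b) :
    ∃ p ∈ Icc a b, ∀ z ∈ Ioc a b, (p < z → z ∈ U) ∧ (z ∈ U → p ≤ z) := by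
  set S := insert b (U ∩ Icc a b)
  have hS : BddBelow S := ⟨a, by rintro s (rfl | ⟨-, hs, -⟩) <;> assumption⟩
  refine ⟨sInf S, ⟨le_csInf (insert_nonempty _ _) ?_, csInf_le hS (mem_insert _ _)⟩, ?_⟩
  · rintro s (rfl | ⟨-, hs, -⟩) <;> assumption
  rintro z ⟨haz, hzb⟩
  refine ⟨fun hpz => ?_, fun hz => csInf_le hS (mem_insert_of_mem _ ⟨hz, haz.le, hzb⟩)⟩
  obtain ⟨s, hs, hsz⟩ := exists_lt_of_csInf_lt (insert_nonempty _ _) hpz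
  rcases hs with rfl | ⟨hs, -⟩
  · exact absurd hzb hsz.not_ge
  · exact hU hsz.le hs

theorem IsUpperSet.monotone_indicator_one {α : Type*} [Preorder α] {U : Set α}
    (hU : IsUpperSet U) : Monotone (U.indicator (1 : α → ℝ)) := by
  intro a b hab
  by_cases ha : a ∈ U
  · simp [ha, hU hab ha]
  · simpa [ha] using indicator_nonneg (f := 1) (fun _ _ => zero_le_one) b

theorem MonotoneOn.exists_monotone_eqOn_Icc {α β : Type*} [LinearOrder α] [Preorder β]
    {f : α → β} {a b : α} (hab : a ≤ b) (hf : MonotoneOn f (Icc a b)) :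
    ∃ F : α → β, Monotone F ∧ EqOn F f (Icc a b) ∧ range F ⊆ f '' Icc a b := by
  refine ⟨IccExtend hab fun z => f z, (monotoneOn_iff_monotone.1 hf).IccExtend _,
    fun z hz => IccExtend_of_mem _ _ hz, ?_⟩
  rintro _ ⟨z, rfl⟩
  exact mem_image_of_mem f (Subtype.prop _)

theorem setIntegral_Ioc_indicator_Ioi {g : ℝ → ℝ} {a b p : ℝ} (hap : a ≤ p) (hpb : p ≤ b) :
    ∫ z in Ioc a b, (Ioi p).indicator g z = ∫ z in p..b, g z := by
  rw [setIntegral_indicator measurableSet_Ioi, Ioc_inter_Ioi, max_eq_right hap,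
    integral_of_le hpb]

theorem IsUpperSet.exists_setIntegral_Ioc_indicator_eq {U : Set ℝ} (hU : IsUpperSet U)
    (g : ℝ → ℝ) {a b : ℝ} (hab : a ≤ b) :
    ∃ p ∈ Icc a b, ∫ z in Ioc a b, U.indicator g z = ∫ z in p..b, g z := by
  obtain ⟨p, hp, hpU⟩ := hU.exists_threshold_of_le hab
  refine ⟨p, hp, (setIntegral_congr_ae measurableSet_Ioc ?_).trans
    (setIntegral_Ioc_indicator_Ioi hp.1 hp.2)⟩
  filter_upwards [Measure.ae_ne volume p] with z hzp hz
  have hzU := hpU z hz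
  by_cases hpz : p < z
  · simp [hpz, hzU.1 hpz]
  · have : z ∉ U := fun h => hpz ((hzU.2 h).lt_of_ne' hzp)
    simp [hpz, this]

section LayerCake

variable {α : Type*} [MeasurableSpace α] {ν : Measure α} {x g : α → ℝ}

theorem integrable_prod_indicator_le (hx : Measurable x) (hg : Integrable g ν) :
    Integrable (fun q : ℝ × α => {z | q.1 ≤ x z}.indicator g q.2)
      ((volume.restrict (Ioc 0 1)).prod ν) := by
  have : IsFiniteMeasure (volume.restrict (Ioc (0:ℝ) 1)) := by
    rw [isFiniteMeasure_restrict]; simp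
  refine ((integrable_const 1).mul_prod hg.norm).mono' ?_ (ae_of_all _ fun q => ?_)
  · exact (hg.aestronglyMeasurable.comp_snd).indicator
      (measurableSet_le measurable_fst (hx.comp measurable_snd))
  · by_cases h : q.1 ≤ x q.2 <;> simp [h]

theorem integral_mul_eq_integral_Ioc_integral_indicator_le [SFinite ν] (hx : Measurable x)
    (hx01 : ∀ z, x z ∈ Icc 0 1) (hg : Integrable g ν) :
    ∫ z, x z * g z ∂ν = ∫ t in Ioc 0 1, ∫ z, {z | t ≤ x z}.indicator g z ∂ν := by
  rw [integral_integral_swap (integrable_prod_indicator_le hx hg)]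
  refine integral_congr_ae (ae_of_all _ fun z => ?_)
  have : (fun t => {z | t ≤ x z}.indicator g z) = (Iic (x z)).indicator fun _ => g z := by
    ext t; simp [indicator_apply]
  simp only [this, setIntegral_indicator measurableSet_Iic, setIntegral_const, Ioc_inter_Iic,
    min_eq_right (hx01 z).2, Real.volume_real_Ioc_of_le (hx01 z).1, sub_zero, smul_eq_mul]

theorem integral_mul_le_of_forall_integral_indicator_le [SFinite ν] (hx : Measurable x)
    (hx01 : ∀ z, x z ∈ Icc 0 1) (hg : Integrable g ν) {M : ℝ}
    (hM : ∀ t ∈ Ioc (0:ℝ) 1, ∫ z, {z | t ≤ x z}.indicator g z ∂ν ≤ M) :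
    ∫ z, x z * g z ∂ν ≤ M := by
  rw [integral_mul_eq_integral_Ioc_integral_indicator_le hx hx01 hg]
  calc ∫ t in Ioc 0 1, ∫ z, {z | t ≤ x z}.indicator g z ∂ν ≤ ∫ t in Ioc (0:ℝ) 1, M :=
        setIntegral_mono_on (integrable_prod_indicator_le hx hg).integral_prod_left
          (integrable_const M) measurableSet_Ioc hM
    _ = M := by simp

end LayerCake

theorem intervalIntegral_mul_le_of_monotone {a b M : ℝ} {x g : ℝ → ℝ} (hab : a ≤ b)
    (hg : IntegrableOn g (Ioc a b)) (hx : Monotone x) (hx01 : ∀ z, x z ∈ Icc 0 1)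
    (hM : ∀ p ∈ Icc a b, ∫ z in p..b, g z ≤ M) :
    ∫ z in a..b, x z * g z ≤ M := by
  rw [integral_of_le hab]
  refine integral_mul_le_of_forall_integral_indicator_le hx.measurable hx01 hg fun t _ => ?_
  have hU : IsUpperSet {z | t ≤ x z} := fun _ _ hzw hz => hz.trans (hx hzw)
  obtain ⟨p, hp, hpU⟩ := hU.exists_setIntegral_Ioc_indicator_eq g hab
  exact hpU ▸ hM p hp

theorem intervalIntegral_mul_le_of_monotoneOn {a b M : ℝ} {x g : ℝ → ℝ} (hab : a ≤ b)
    (hg : IntegrableOn g (Ioc a b)) (hx : MonotoneOn x (Icc a b))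
    (hx01 : ∀ z ∈ Icc a b, x z ∈ Icc 0 1) (hM : ∀ p ∈ Icc a b, ∫ z in p..b, g z ≤ M) :
    ∫ z in a..b, x z * g z ≤ M := by
  obtain ⟨x', hx'_mono, hx'_eq, hx'_range⟩ := hx.exists_monotone_eqOn_Icc hab
  have hx'01 : ∀ z, x' z ∈ Icc 0 1 := fun z => by
    obtain ⟨w, hw, hwz⟩ := hx'_range (mem_range_self z)
    exact hwz ▸ hx01 w hw
  rw [integral_congr (g := fun z => x' z * g z) fun z hz => by simp only [hx'_eq (uIcc_of_le hab ▸ hz)]]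
  exact intervalIntegral_mul_le_of_monotone hab hg hx'_mono hx'01 hM

/-- **Bang-bang (threshold) optimality over monotone allocations.**
For integrable `g` on `[0, θ̄]`, the supremum over nondecreasing allocations
`x : [0, θ̄] → [0, 1]` of `∫_0^{θ̄} x(z) g(z) dz` equals the supremum over
threshold (bang-bang) allocations, i.e. `sup_{p ∈ [0, θ̄]} ∫_p^{θ̄} g(z) dz`. -/
theorem monotone_allocation_bang_bang
    (θ : ℝ) (hθ : 0 < θ) (g : ℝ → ℝ)
    (hg : IntervalIntegrable g MeasureTheory.volume 0 θ) :
    sSup ((fun x : ℝ → ℝ => ∫ z in (0:ℝ)..θ, x z * g z) ''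
        {x | MonotoneOn x (Set.Icc 0 θ) ∧
          ∀ z ∈ Set.Icc (0:ℝ) θ, x z ∈ Set.Icc (0:ℝ) 1})
      = sSup ((fun p => ∫ z in p..θ, g z) '' Set.Icc 0 θ) := by
  set L := (fun x : ℝ → ℝ => ∫ z in (0:ℝ)..θ, x z * g z) ''
    {x | MonotoneOn x (Icc 0 θ) ∧ ∀ z ∈ Icc (0:ℝ) θ, x z ∈ Icc (0:ℝ) 1}
  set R := (fun p => ∫ z in p..θ, g z) '' Icc 0 θ
  have hR_ne : R.Nonempty := (nonempty_Icc.2 hθ.le).image _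
  have hR_bdd : BddAbove R := isCompact_Icc.bddAbove_image <| by
    simpa [uIcc_of_le hθ.le] using
      continuousOn_primitive_interval_left ((intervalIntegrable_iff' (f := g)).1 hg)
  have hR_sub : R ⊆ L := by
    rintro _ ⟨p, hp, rfl⟩
    refine ⟨(Ioi p).indicator 1, ⟨(isUpperSet_Ioi p).monotone_indicator_one.monotoneOn _,
      fun z _ => by by_cases hpz : p < z <;> simp [hpz]⟩, ?_⟩
    simp only [← indicator_mul_left, Pi.one_apply, one_mul]
    rw [integral_of_le hθ.le, setIntegral_Ioc_indicator_Ioi hp.1 hp.2]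
  have hL_le : ∀ y ∈ L, y ≤ sSup R := by
    rintro _ ⟨x, ⟨hx, hx01⟩, rfl⟩
    exact intervalIntegral_mul_le_of_monotoneOn hθ.le
      ((intervalIntegrable_iff_integrableOn_Ioc_of_le hθ.le).1 hg) hx hx01
      fun p hp => le_csSup hR_bdd ⟨p, hp, rfl⟩
  exact le_antisymm (csSup_le (hR_ne.mono hR_sub) hL_le) (csSup_le_csSup ⟨_, hL_le⟩ hR_ne hR_sub)
end

section
/- Let K ≥ 1, θ̄ > 0, α_1,…,α_K > 0 with Σ_k α_k = 1, and for each k let F_k : [0, θ̄] → [0,1] be a continuously differentiable CDF with F_k(0) = 0, F_k(θ̄) = 1 and density f_k = F_k′, such that each profit function π_k(p) = p·(1 − F_k(p)) is concave on [0, θ̄]. Define the optimal sequential-screening profit with ex-post participation constraints as Π^seq = sup of Σ_k α_k·( −u_k + ∫_0^{θ̄} x_k(z)·(z·f_k(z) − (1 − F_k(z))) dz ) over all u_1,…,u_K ≥ 0 and nondecreasing x_1,…,x_K : [0, θ̄] → [0,1] satisfying the interim incentive constraints u_k + ∫_0^{θ̄} x_k(z)·(1 − F_k(z)) dz ≥ u_{k′}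 + ∫_0^{θ̄} x_{k′}(z)·(1 − F_k(z)) dz for all k, k′. Then the optimal static (uniform-price) profit Π^U = sup_{p ∈ [0,θ̄]} Σ_k α_k·p·(1 − F_k(p)) satisfies Π^U ≥ (1/2)·Π^seq; i.e., the optimal static contract is a 1/2-approximation of the optimal sequential screening mechanism. -/
open intervalIntegral

/-!
For one interim type, write `π p = p (1 - F p)` for the revenue of the posted price `p`, so that
`π' z = -(z f z - (1 - F z))`. For any allocation `x` with values in `[0, 1]`, the virtual surplus
`∫ x (z f - (1 - F))` is at most `max π`: split the integral at a maximiser `p` of the concave `π`;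
before `p` the integrand is nonpositive, after `p` it is at most `-π'`, which integrates to
`π p - π θ̄ = π p`. Concavity and `π 0 = π θ̄ = 0` give `max π ≤ 2 π (θ̄ / 2)`, so every type
contributes to the sequential profit at most twice what the single price `θ̄ / 2` earns from it.
-/

open Set MeasureTheory

section Concave

variable {g φ x : ℝ → ℝ} {a b p : ℝ}

theorem ConcaveOn.nonneg_of_nonneg_endpoints (hg : ConcaveOn ℝ (Icc a b) g) (ha : 0 ≤ g a)
    (hb : 0 ≤ g b) {z : ℝ} (hz : z ∈ Icc a b) : 0 ≤ g z := by
  have hab : a ≤ b := hz.1.trans hz.2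
  have := hg.ge_on_segment (left_mem_Icc.2 hab) (right_mem_Icc.2 hab)
    (by rwa [segment_eq_Icc hab])
  exact (le_min ha hb).trans this

/-- The midpoint of `q` and its reflection `a + b - q` is the midpoint of `[a, b]`. -/
theorem ConcaveOn.le_two_mul_apply_midpoint (hg : ConcaveOn ℝ (Icc a b) g) (ha : 0 ≤ g a)
    (hb : 0 ≤ g b) {q : ℝ} (hq : q ∈ Icc a b) : g q ≤ 2 * g ((a + b) / 2) := by
  have hq' : a + b - q ∈ Icc a b := ⟨by linarith [hq.2], by linarith [hq.1]⟩
  have hmid := hg.2 hq hq' (by norm_num : (0 : ℝ) ≤ 1 / 2) (by norm_num : (0 : ℝ) ≤ 1 / 2)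
    (by norm_num)
  have hcombo : (1 / 2 : ℝ) • q + (1 / 2 : ℝ) • (a + b - q) = (a + b) / 2 := by
    simp only [smul_eq_mul]; ring
  rw [hcombo, smul_eq_mul, smul_eq_mul] at hmid
  linarith [hg.nonneg_of_nonneg_endpoints ha hb hq']

theorem ConcaveOn.nonneg_deriv_of_lt_isMaxOn (hg : ConcaveOn ℝ (Icc a b) g)
    (hmax : IsMaxOn g (Icc a b) p) (hp : p ∈ Icc a b) {z : ℝ} (hz : z ∈ Icc a b) (hzp : z < p)
    (hderiv : HasDerivAt g (-φ z) z) : 0 ≤ -φ z := by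
  refine le_trans ?_ (hg.slope_le_of_hasDerivAt hz hp hzp hderiv)
  rw [slope_def_field]
  exact div_nonneg (sub_nonneg.2 (hmax hz)) (sub_nonneg.2 hzp.le)

theorem ConcaveOn.deriv_nonpos_of_isMaxOn_lt (hg : ConcaveOn ℝ (Icc a b) g)
    (hmax : IsMaxOn g (Icc a b) p) (hp : p ∈ Icc a b) {z : ℝ} (hz : z ∈ Icc a b) (hpz : p < z)
    (hderiv : HasDerivAt g (-φ z) z) : -φ z ≤ 0 := by
  refine (hg.le_slope_of_hasDerivAt hp hz hpz hderiv).trans ?_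
  rw [slope_def_field]
  exact div_nonpos_of_nonpos_of_nonneg (sub_nonpos.2 (hmax hz)) (sub_nonneg.2 hpz.le)

theorem ConcaveOn.integral_mul_le_sub_of_isMaxOn (hg : ConcaveOn ℝ (Icc a b) g)
    (hderiv : ∀ z ∈ Icc a b, HasDerivAt g (-φ z) z) (hφ : ContinuousOn φ (Icc a b))
    (hx : IntervalIntegrable x volume a b) (hx01 : ∀ z ∈ Icc a b, x z ∈ Icc 0 1)
    (hmax : IsMaxOn g (Icc a b) p) (hp : p ∈ Icc a b) :
    ∫ z in a..b, x z * φ z ≤ g p - g b := by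
  have hab : a ≤ b := hp.1.trans hp.2
  have hp' : p ∈ uIcc a b := mem_uIcc_of_le hp.1 hp.2
  have hxφ : IntervalIntegrable (fun z => x z * φ z) volume a b :=
    hx.mul_continuousOn (by rwa [uIcc_of_le hab])
  have hφpb : IntervalIntegrable φ volume p b :=
    (hφ.mono (Icc_subset_Icc_left hp.1)).intervalIntegrable_of_Icc hp.2
  have hleft : ∫ z in a..p, x z * φ z ≤ 0 := by
    refine (integral_mono_on_of_le_Ioo hp.1 (hxφ.mono_set (uIcc_subset_uIcc_left hp'))
      intervalIntegrable_const fun z hz => ?_).trans_eq integral_zero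
    have hzI : z ∈ Icc a b := ⟨hz.1.le, hz.2.le.trans hp.2⟩
    exact mul_nonpos_of_nonneg_of_nonpos (hx01 z hzI).1
      (neg_nonneg.1 (hg.nonneg_deriv_of_lt_isMaxOn hmax hp hzI hz.2 (hderiv z hzI)))
  have hright : ∫ z in p..b, x z * φ z ≤ ∫ z in p..b, φ z := by
    refine integral_mono_on_of_le_Ioo hp.2 (hxφ.mono_set (uIcc_subset_uIcc_right hp')) hφpb
      fun z hz => ?_
    have hzI : z ∈ Icc a b := ⟨hp.1.trans hz.1.le, hz.2.le⟩
    exact mul_le_of_le_one_left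
      (neg_nonpos.1 (hg.deriv_nonpos_of_isMaxOn_lt hmax hp hzI hz.1 (hderiv z hzI)))
      (hx01 z hzI).2
  have hftc : ∫ z in p..b, -φ z = g b - g p :=
    integral_eq_sub_of_hasDerivAt
      (fun z hz => hderiv z (Icc_subset_Icc_left hp.1 (by rwa [uIcc_of_le hp.2] at hz)))
      hφpb.neg
  rw [intervalIntegral.integral_neg] at hftc
  rw [← integral_add_adjacent_intervals (hxφ.mono_set (uIcc_subset_uIcc_left hp'))
    (hxφ.mono_set (uIcc_subset_uIcc_right hp'))]
  linarith

end Concave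

section Screening

variable {θ : ℝ} {F f x : ℝ → ℝ}

theorem revenue_nonneg_of_concaveOn (hF1 : F θ = 1)
    (hconc : ConcaveOn ℝ (Icc 0 θ) (fun p => p * (1 - F p))) {p : ℝ} (hp : p ∈ Icc 0 θ) :
    0 ≤ p * (1 - F p) :=
  hconc.nonneg_of_nonneg_endpoints (by simp) (by simp [hF1]) hp

/-- The integrand is the virtual value `z - (1 - F z) / f z` weighted by the density; it is minus
the derivative of the revenue `p (1 - F p)` of the posted price `p`. -/
theorem integral_mul_virtualValue_le_two_mul_revenue_half (hθ : 0 ≤ θ) (hF1 : F θ = 1)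
    (hderiv : ∀ z ∈ Icc 0 θ, HasDerivAt F (f z) z)
    (hf : ContinuousOn f (Icc 0 θ)) (hconc : ConcaveOn ℝ (Icc 0 θ) (fun p => p * (1 - F p)))
    (hx : IntervalIntegrable x volume 0 θ) (hx01 : ∀ z ∈ Icc 0 θ, x z ∈ Icc 0 1) :
    ∫ z in 0..θ, x z * (z * f z - (1 - F z)) ≤ 2 * (θ / 2 * (1 - F (θ / 2))) := by
  set π : ℝ → ℝ := fun p => p * (1 - F p) with hπ
  have hπd : ∀ z ∈ Icc 0 θ, HasDerivAt π (-(z * f z - (1 - F z))) z := fun z hz =>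
    ((hasDerivAt_id z).mul ((hasDerivAt_const z 1).sub (hderiv z hz))).congr_deriv
      (by simp only [id, Pi.sub_apply]; ring)
  have hFcont : ContinuousOn F (Icc 0 θ) := fun z hz =>
    (hderiv z hz).continuousAt.continuousWithinAt
  obtain ⟨p, hp, hmax⟩ := isCompact_Icc.exists_isMaxOn (nonempty_Icc.2 hθ)
    fun z hz => (hπd z hz).continuousAt.continuousWithinAt
  calc ∫ z in 0..θ, x z * (z * f z - (1 - F z))
      ≤ π p - π θ := hconc.integral_mul_le_sub_of_isMaxOn (φ := fun z => z * f z - (1 - F z))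
        hπd ((continuousOn_id.mul hf).sub (continuousOn_const.sub hFcont)) hx hx01 hmax hp
    _ = π p := by simp [hπ, hF1]
    _ ≤ 2 * π ((0 + θ) / 2) :=
        hconc.le_two_mul_apply_midpoint (by simp [hπ]) (by simp [hπ, hF1]) hp
    _ = 2 * (θ / 2 * (1 - F (θ / 2))) := by rw [zero_add]

end Screening

theorem sequential_screening_half_approximation_general
    (K : ℕ) (θ : ℝ) (hθ : 0 < θ)
    (α : Fin K → ℝ) (hα : ∀ k, 0 < α k)
    (F f : Fin K → ℝ → ℝ)
    (hF1 : ∀ k, F k θ = 1)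
    (hderiv : ∀ k, ∀ z ∈ Set.Icc (0:ℝ) θ, HasDerivAt (F k) (f k z) z)
    (hfcont : ∀ k, ContinuousOn (f k) (Set.Icc 0 θ))
    (hconc : ∀ k, ConcaveOn ℝ (Set.Icc 0 θ) (fun p => p * (1 - F k p))) :
    sSup ((fun p => ∑ k, α k * (p * (1 - F k p))) '' Set.Icc 0 θ)
      ≥ (1 / 2) * sSup {w : ℝ | ∃ (u : Fin K → ℝ) (x : Fin K → ℝ → ℝ),
          (∀ k, 0 ≤ u k) ∧
          (∀ k, MonotoneOn (x k) (Set.Icc 0 θ)) ∧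
          (∀ k, ∀ z ∈ Set.Icc (0:ℝ) θ, x k z ∈ Set.Icc (0:ℝ) 1) ∧
          (∀ k k' : Fin K,
            u k + ∫ z in (0:ℝ)..θ, x k z * (1 - F k z)
              ≥ u k' + ∫ z in (0:ℝ)..θ, x k' z * (1 - F k z)) ∧
          w = ∑ k, α k * (-(u k) +
              ∫ z in (0:ℝ)..θ, x k z * (z * f k z - (1 - F k z)))} := by
  have hmid : θ / 2 ∈ Icc 0 θ := ⟨by linarith, by linarith⟩
  have hstatic : ContinuousOn (fun p => ∑ k, α k * (p * (1 - F k p))) (Icc 0 θ) :=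
    continuousOn_finsetSum _ fun k _ => continuousOn_const.mul (continuousOn_id.mul
      (continuousOn_const.sub fun z hz => (hderiv k z hz).continuousAt.continuousWithinAt))
  refine le_trans ?_ (le_csSup (isCompact_Icc.image_of_continuousOn hstatic).bddAbove
    ⟨θ / 2, hmid, rfl⟩)
  rw [one_div, inv_mul_le_iff₀ two_pos, Finset.mul_sum]
  refine Real.sSup_le ?_ (Finset.sum_nonneg fun k _ => mul_nonneg zero_le_two
    (mul_nonneg (hα k).le (revenue_nonneg_of_concaveOn (hF1 k) (hconc k) hmid)))
  rintro w ⟨u, x, hu, hx, hx01, -, rfl⟩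
  refine Finset.sum_le_sum fun k _ => ?_
  have hk := integral_mul_virtualValue_le_two_mul_revenue_half hθ.le (hF1 k) (hderiv k)
    (hfcont k) (hconc k) (MonotoneOn.intervalIntegrable (by rw [uIcc_of_le hθ.le]; exact hx k))
    (hx01 k)
  exact (mul_le_mul_of_nonneg_left (by linarith [hu k]) (hα k).le).trans_eq (mul_left_comm _ _ _)

/-- **Half approximation in sequential screening.**
In the sequential screening problem with ex-post participation constraints,
with interim types `k` of probability `α k > 0`, ex-post value CDFs `F k` on
`[0, θ̄]` with densities `f k`, and concave profit functions
`π k p = p (1 - F k p)` (common bounded support), the optimal static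
(uniform-price) profit is at least one half of the optimal sequential
screening profit. -/
theorem sequential_screening_half_approximation
    (K : ℕ) (hK : 1 ≤ K) (θ : ℝ) (hθ : 0 < θ)
    (α : Fin K → ℝ) (hα : ∀ k, 0 < α k) (hsum : ∑ k, α k = 1)
    (F f : Fin K → ℝ → ℝ)
    (hF0 : ∀ k, F k 0 = 0) (hF1 : ∀ k, F k θ = 1)
    (hderiv : ∀ k, ∀ z ∈ Set.Icc (0:ℝ) θ, HasDerivAt (F k) (f k z) z)
    (hfcont : ∀ k, ContinuousOn (f k) (Set.Icc 0 θ))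
    (hFrange : ∀ k, ∀ z ∈ Set.Icc (0:ℝ) θ, F k z ∈ Set.Icc (0:ℝ) 1)
    (hconc : ∀ k, ConcaveOn ℝ (Set.Icc 0 θ) (fun p => p * (1 - F k p))) :
    sSup ((fun p => ∑ k, α k * (p * (1 - F k p))) '' Set.Icc 0 θ)
      ≥ (1 / 2) * sSup {w : ℝ | ∃ (u : Fin K → ℝ) (x : Fin K → ℝ → ℝ),
          (∀ k, 0 ≤ u k) ∧
          (∀ k, MonotoneOn (x k) (Set.Icc 0 θ)) ∧
          (∀ k, ∀ z ∈ Set.Icc (0:ℝ) θ, x k z ∈ Set.Icc (0:ℝ) 1) ∧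
          (∀ k k' : Fin K,
            u k + ∫ z in (0:ℝ)..θ, x k z * (1 - F k z)
              ≥ u k' + ∫ z in (0:ℝ)..θ, x k' z * (1 - F k z)) ∧
          w = ∑ k, α k * (-(u k) +
              ∫ z in (0:ℝ)..θ, x k z * (z * f k z - (1 - F k z)))} :=
  sequential_screening_half_approximation_general K θ hθ α hα F f hF1 hderiv hfcont hconc
end
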